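/- arXiv:1007.5267 — 10 statements merged into one kernel-verified Lean document; each statement's English description precedes it below -/
import Mathlib

section
/- Let A be an n×n complex matrix and u ∈ ℂⁿ a unit vector with ‖(I + A)u‖ ≥ 1. Then for every real t ≥ 1, ‖(I + tA)u‖ ≥ ‖(I + A)u‖; moreover, if t > 1 and Au ≠ 0, then the inequality is strict: ‖(I + tA)u‖ > ‖(I + A)u‖. -/
open Matrix

/-!
Writing `v = A u`, we have `(I + tA)u = u + t v`. For `t ≥ 1` the point `u + v` is the convex
combination `(1 - t⁻¹) u + t⁻¹ (u + t v)`, so the triangle inequality together with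
`‖u‖ ≤ ‖u + v‖` forces `‖u + v‖ ≤ ‖u + t v‖`. If `t > 1` and `v ≠ 0`, the two endpoints are
distinct and strict convexity of the Euclidean norm makes the inequality strict.
-/

section ConvexCombination

variable {E : Type*}

lemma add_eq_combo_add_smul [AddCommGroup E] [Module ℝ E] (u v : E) {t : ℝ} (ht : t ≠ 0) :
    u + v = (1 - t⁻¹) • u + t⁻¹ • (u + t • v) := by
  rw [smul_add, smul_smul, inv_mul_cancel₀ ht, one_smul, sub_smul, one_smul]
  abel

lemma norm_add_le_norm_add_smul [SeminormedAddCommGroup E] [NormedSpace ℝ E] {u v : E}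
    (h : ‖u‖ ≤ ‖u + v‖) {t : ℝ} (ht : 1 ≤ t) : ‖u + v‖ ≤ ‖u + t • v‖ := by
  have ht₀ : 0 < t := one_pos.trans_le ht
  have hinv : t⁻¹ ≤ 1 := inv_le_one_of_one_le₀ ht
  have hcombo : ‖u + v‖ ≤ (1 - t⁻¹) * ‖u + v‖ + t⁻¹ * ‖u + t • v‖ :=
    calc ‖u + v‖ = ‖(1 - t⁻¹) • u + t⁻¹ • (u + t • v)‖ := by
          rw [← add_eq_combo_add_smul u v ht₀.ne']
      _ ≤ (1 - t⁻¹) * ‖u‖ + t⁻¹ * ‖u + t • v‖ := by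
          refine (norm_add_le _ _).trans_eq ?_
          rw [norm_smul, norm_smul, Real.norm_of_nonneg (sub_nonneg.2 hinv),
            Real.norm_of_nonneg (inv_nonneg.2 ht₀.le)]
      _ ≤ (1 - t⁻¹) * ‖u + v‖ + t⁻¹ * ‖u + t • v‖ := by
          gcongr
  have : t⁻¹ * ‖u + v‖ ≤ t⁻¹ * ‖u + t • v‖ := by linarith
  exact le_of_mul_le_mul_left this (inv_pos.2 ht₀)

lemma norm_add_lt_norm_add_smul [NormedAddCommGroup E] [NormedSpace ℝ E] [StrictConvexSpace ℝ E]
    {u v : E} (h : ‖u‖ ≤ ‖u + v‖) (hv : v ≠ 0) {t : ℝ} (ht : 1 < t) :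
    ‖u + v‖ < ‖u + t • v‖ := by
  have ht₀ : 0 < t := one_pos.trans ht
  by_contra! hle
  have hne : u ≠ u + t • v := by
    simpa [eq_comm (a := (0 : E))] using smul_ne_zero ht₀.ne' hv
  have := norm_combo_lt_of_ne h hle hne (sub_pos.2 (inv_lt_one_of_one_lt₀ ht)) (inv_pos.2 ht₀)
    (sub_add_cancel 1 t⁻¹)
  rw [← add_eq_combo_add_smul u v ht₀.ne'] at this
  exact lt_irrefl _ this

end ConvexCombination

/-- For a unit vector `u` with `‖(I + A)u‖ ≥ 1`: for all `t ≥ 1`,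
`‖(I + tA)u‖ ≥ ‖(I + A)u‖`, with strict inequality when `t > 1` and `Au ≠ 0`.
Here matrices act on Euclidean space `ℂⁿ` via `Matrix.toEuclideanCLM`. -/
theorem norm_one_add_smul_apply_ge {n : ℕ} (A : Matrix (Fin n) (Fin n) ℂ)
    (u : EuclideanSpace ℂ (Fin n)) (hu : ‖u‖ = 1)
    (h : 1 ≤ ‖Matrix.toEuclideanCLM (𝕜 := ℂ) (1 + A) u‖) :
    (∀ t : ℝ, 1 ≤ t →
      ‖Matrix.toEuclideanCLM (𝕜 := ℂ) (1 + A) u‖ ≤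
        ‖Matrix.toEuclideanCLM (𝕜 := ℂ) (1 + (t : ℂ) • A) u‖) ∧
    (∀ t : ℝ, 1 < t → Matrix.toEuclideanCLM (𝕜 := ℂ) A u ≠ 0 →
      ‖Matrix.toEuclideanCLM (𝕜 := ℂ) (1 + A) u‖ <
        ‖Matrix.toEuclideanCLM (𝕜 := ℂ) (1 + (t : ℂ) • A) u‖) := by
  set v := Matrix.toEuclideanCLM (𝕜 := ℂ) A u
  have hsmul (t : ℝ) : Matrix.toEuclideanCLM (𝕜 := ℂ) (1 + (t : ℂ) • A) u = u + t • v := by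
    rw [map_add, map_one, map_smul, ← Complex.coe_smul]; rfl
  have hone : Matrix.toEuclideanCLM (𝕜 := ℂ) (1 + A) u = u + v := by
    simp [v]
  rw [hone] at h ⊢
  have hle : ‖u‖ ≤ ‖u + v‖ := hu ▸ h
  exact ⟨fun t ht => hsmul t ▸ norm_add_le_norm_add_smul hle ht,
    fun t ht hv => hsmul t ▸ norm_add_lt_norm_add_smul hle hv ht⟩
end

section
/- Let A be a nonzero n×n complex matrix with ‖I + A‖ ≥ 1, where ‖·‖ is the operator norm induced by the Euclidean norm. Suppose there exists a unit vector u ∈ ℂⁿ such that ‖(I + A)u‖ = ‖I + A‖ and Au ≠ 0. Then the function t ↦ ‖I + tA‖ is strictly increasing on [1, ∞). -/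
/-!
`f(t) = ‖I + tA‖` is a convex function of the real variable `t`, and `f(0) = ‖I‖ ≤ 1 ≤ f(1)`.
A convex function that does not decrease from `0` to `1` and exceeds `f(1)` everywhere past `1`
is strictly increasing on `[1, ∞)`. The norming vector `u` gives `f(t) > f(1)` for `t > 1`: with
`v = Au ≠ 0`, `t ↦ ‖u + tv‖²` is a quadratic with positive leading coefficient and value at `1`
at least its value at `0`, so `f(t) ≥ ‖u + tv‖ > ‖u + v‖ = f(1)`.
-/

open Matrix

/-- The operator norm of a complex `n × n` matrix induced by the Euclidean norm on `ℂⁿ`. -/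
noncomputable def euclOpNorm {n : ℕ} (M : Matrix (Fin n) (Fin n) ℂ) : ℝ :=
  ‖Matrix.toEuclideanCLM (𝕜 := ℂ) M‖

theorem ConvexOn.strictMonoOn_of_le_of_forall_lt {𝕜 : Type*} [Field 𝕜] [LinearOrder 𝕜]
    [IsStrictOrderedRing 𝕜] {s : Set 𝕜} {f : 𝕜 → 𝕜} (hf : ConvexOn 𝕜 s f) {x y : 𝕜}
    (hx : x ∈ s) (hxy : x < y) (hle : f x ≤ f y) (hlt : ∀ z ∈ s, y < z → f y < f z) :
    StrictMonoOn f (s ∩ Set.Ici y) := by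
  rintro a ⟨ha, hya⟩ b ⟨hb, -⟩ hab
  rcases hya.eq_or_lt with rfl | hya
  · exact hlt b hb hab
  · exact hf.strictMonoOn hx (hxy.trans hya) (hle.trans_lt (hlt a ha hya))
      ⟨ha, le_rfl⟩ ⟨hb, hab.le⟩ hab

theorem convexOn_norm_add_ofReal_smul {𝕜 E : Type*} [RCLike 𝕜] [SeminormedAddCommGroup E]
    [NormedSpace 𝕜 E] (a b : E) : ConvexOn ℝ Set.univ fun t : ℝ => ‖a + (t : 𝕜) • b‖ := by
  refine ⟨convex_univ, fun x _ y _ α β hα hβ hαβ => ?_⟩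
  have hsplit : a + ((α • x + β • y : ℝ) : 𝕜) • b
      = (α : 𝕜) • (a + (x : 𝕜) • b) + (β : 𝕜) • (a + (y : 𝕜) • b) := by
    have hαβ' : (α : 𝕜) + β = 1 := by exact_mod_cast hαβ
    simp only [smul_eq_mul]
    push_cast
    linear_combination (norm := module) -(hαβ' • a)
  calc ‖a + ((α • x + β • y : ℝ) : 𝕜) • b‖
      ≤ ‖(α : 𝕜) • (a + (x : 𝕜) • b)‖ + ‖(β : 𝕜) • (a + (y : 𝕜) • b)‖ :=
        hsplit ▸ norm_add_le _ _
    _ = α • ‖a + (x : 𝕜) • b‖ + β • ‖a + (y : 𝕜) • b‖ := by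
      simp only [norm_smul, RCLike.norm_ofReal, abs_of_nonneg hα, abs_of_nonneg hβ, smul_eq_mul]

theorem norm_add_lt_norm_add_ofReal_smul {𝕜 E : Type*} [RCLike 𝕜] [NormedAddCommGroup E]
    [InnerProductSpace 𝕜 E] {u v : E} (hv : v ≠ 0) (h : ‖u‖ ≤ ‖u + v‖) {t : ℝ} (ht : 1 < t) :
    ‖u + v‖ < ‖u + (t : 𝕜) • v‖ := by
  have hsq (s : ℝ) : ‖u + (s : 𝕜) • v‖ ^ 2
      = ‖u‖ ^ 2 + 2 * s * RCLike.re (inner 𝕜 u v) + s ^ 2 * ‖v‖ ^ 2 := by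
    rw [norm_add_sq (𝕜 := 𝕜), inner_smul_right, RCLike.re_ofReal_mul, norm_smul,
      RCLike.norm_ofReal, mul_pow, sq_abs]
    ring
  have h1 := hsq 1
  simp only [RCLike.ofReal_one, one_smul, one_pow, one_mul, mul_one] at h1
  have hv2 : 0 < ‖v‖ ^ 2 := by positivity
  have hsq_le : ‖u‖ ^ 2 ≤ ‖u + v‖ ^ 2 := pow_le_pow_left₀ (norm_nonneg _) h 2
  refine lt_of_pow_lt_pow_left₀ 2 (norm_nonneg _) ?_
  rw [hsq t, h1]
  nlinarith [mul_pos (sub_pos.2 ht) hv2]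

theorem strictMonoOn_norm_one_add_smul_general {n : ℕ} (A : Matrix (Fin n) (Fin n) ℂ)
    (h : 1 ≤ euclOpNorm (1 + A))
    (hu : ∃ u : EuclideanSpace ℂ (Fin n), ‖u‖ = 1 ∧
      ‖Matrix.toEuclideanCLM (𝕜 := ℂ) (1 + A) u‖ = euclOpNorm (1 + A) ∧
      Matrix.toEuclideanCLM (𝕜 := ℂ) A u ≠ 0) :
    StrictMonoOn (fun t : ℝ => euclOpNorm (1 + (t : ℂ) • A)) (Set.Ici 1) := by
  obtain ⟨u, hu1, hnorm, hAu⟩ := hu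
  set T := Matrix.toEuclideanCLM (𝕜 := ℂ) A
  have hf (t : ℝ) : euclOpNorm (1 + (t : ℂ) • A) = ‖1 + (t : ℂ) • T‖ := by
    rw [euclOpNorm, map_add, map_one, map_smul]
  have hattained : euclOpNorm (1 + A) = ‖u + T u‖ := by
    rw [← hnorm, map_add, map_one]
    rfl
  have hzero : euclOpNorm (1 + ((0 : ℝ) : ℂ) • A) ≤ euclOpNorm (1 + ((1 : ℝ) : ℂ) • A) := by
    rw [Complex.ofReal_zero, zero_smul, add_zero, Complex.ofReal_one, one_smul]
    calc euclOpNorm 1 ≤ 1 := by rw [euclOpNorm, map_one]; exact ContinuousLinearMap.norm_id_le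
      _ ≤ euclOpNorm (1 + A) := h
  have hpast (t : ℝ) (ht : 1 < t) :
      euclOpNorm (1 + ((1 : ℝ) : ℂ) • A) < euclOpNorm (1 + (t : ℂ) • A) := calc
    euclOpNorm (1 + ((1 : ℝ) : ℂ) • A) = ‖u + T u‖ := by
      rw [Complex.ofReal_one, one_smul, hattained]
    _ < ‖u + (t : ℂ) • T u‖ :=
      norm_add_lt_norm_add_ofReal_smul hAu (by rw [hu1, ← hattained]; exact h) ht
    _ ≤ ‖1 + (t : ℂ) • T‖ := 
      (1 + (t : ℂ) • T).unit_le_opNorm u hu1.le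
    _ = euclOpNorm (1 + (t : ℂ) • A) := (hf t).symm
  have hconv : ConvexOn ℝ Set.univ fun t : ℝ => euclOpNorm (1 + (t : ℂ) • A) := by
    rw [funext hf]
    exact convexOn_norm_add_ofReal_smul 1 T
  rw [← Set.univ_inter (Set.Ici 1)]
  exact hconv.strictMonoOn_of_le_of_forall_lt (Set.mem_univ 0) zero_lt_one hzero
    fun t _ ht => hpast t ht

/-- If `A ≠ 0`, `‖I + A‖ ≥ 1`, and the operator norm of `I + A` is attained at a unit
vector `u` with `Au ≠ 0`, then `t ↦ ‖I + tA‖` is strictly increasing on `[1, ∞)`. -/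
theorem strictMonoOn_norm_one_add_smul {n : ℕ} (A : Matrix (Fin n) (Fin n) ℂ) (hA : A ≠ 0)
    (h : 1 ≤ euclOpNorm (1 + A))
    (hu : ∃ u : EuclideanSpace ℂ (Fin n), ‖u‖ = 1 ∧
      ‖Matrix.toEuclideanCLM (𝕜 := ℂ) (1 + A) u‖ = euclOpNorm (1 + A) ∧
      Matrix.toEuclideanCLM (𝕜 := ℂ) A u ≠ 0) :
    StrictMonoOn (fun t : ℝ => euclOpNorm (1 + (t : ℂ) • A)) (Set.Ici 1) :=
  strictMonoOn_norm_one_add_smul_general A h hu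
end

section
/- Let A be a nonzero n×n complex matrix with ‖I + A‖ ≥ 1, where ‖·‖ is the operator norm induced by the Euclidean norm. Suppose that Au = 0 for every unit vector u ∈ ℂⁿ satisfying ‖(I + A)u‖ = ‖I + A‖. Then ‖I + A‖ = 1, and there exist an integer k with 1 ≤ k < n and a unitary matrix U such that U*AU = 0_k ⊕ Ã is block diagonal, where 0_k is the k×k zero matrix and Ã is an invertible (n−k)×(n−k) matrix satisfying ‖I_{n−k} + Ã‖ < 1. -/
/-!
Let `T = I + A`. In finite dimension `‖T‖` is attained at some unit vector `u`; by hypothesis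
`Au = 0`, so `‖T‖ = ‖Tu‖ = ‖u‖ = 1`. A vector fixed by a contraction `T` is also fixed by `T*`,
since `‖T* u - u‖² = ‖T* u‖² - 2 Re ⟪u, Tu⟫ + ‖u‖² = ‖T* u‖² - ‖u‖² ≤ 0`. Hence `A* u = 0` for
every `u ∈ K = ker A`, so `range A ⊥ K` and `K` reduces `A`: in an orthonormal basis adapted to
`K ⊕ Kᗮ` the matrix of `A` is `0 ⊕ Ã`, with `Ã` the compression of `A` to `Kᗮ`. It is injective
because `Kᗮ ∩ ker A = 0`, and `‖I + Ã‖ < 1` because a unit vector of `Kᗮ` attaining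
`‖I + Ã‖ = 1` would attain `‖T‖` and so lie in `K`.
-/

open Matrix

open scoped InnerProductSpace

namespace ContinuousLinearMap

section NormingVectors

variable {𝕜 E F : Type*} [RCLike 𝕜] [NormedAddCommGroup E] [NormedSpace 𝕜 E]
  [NormedAddCommGroup F] [NormedSpace 𝕜 F]

def normingVectors (f : E →L[𝕜] F) : Set E := {u | ‖u‖ = 1 ∧ ‖f u‖ = ‖f‖}

variable [FiniteDimensional 𝕜 E]

theorem normingVectors_nonempty [Nontrivial E] (f : E →L[𝕜] F) : f.normingVectors.Nonempty := by
  have := FiniteDimensional.proper_rclike 𝕜 E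
  obtain ⟨x, hx⟩ := exists_ne (0 : E)
  obtain ⟨u, hu, hmax⟩ := (isCompact_sphere (0 : E) 1).exists_isMaxOn
    ⟨_, mem_sphere_zero_iff_norm.2 (norm_smul_inv_norm (𝕜 := 𝕜) hx)⟩
    f.continuous.norm.continuousOn
  have hu : ‖u‖ = 1 := mem_sphere_zero_iff_norm.1 hu
  refine ⟨u, hu, le_antisymm (by simpa [hu] using f.le_opNorm u) ?_⟩
  exact opNorm_le_of_unit_norm (norm_nonneg _) fun x hx => hmax (mem_sphere_zero_iff_norm.2 hx)

theorem opNorm_lt_of_forall_norm_apply_lt (f : E →L[𝕜] F) {c : ℝ} (hc : 0 < c)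
    (h : ∀ x : E, ‖x‖ = 1 → ‖f x‖ < c) : ‖f‖ < c := by
  rcases subsingleton_or_nontrivial E with hE | hE
  · rwa [opNorm_subsingleton]
  · obtain ⟨u, hu, hfu⟩ := f.normingVectors_nonempty
    exact hfu ▸ h u hu

end NormingVectors

variable {𝕜 E : Type*} [RCLike 𝕜] [NormedAddCommGroup E] [InnerProductSpace 𝕜 E]

theorem adjoint_apply_eq_self_of_apply_eq_self [CompleteSpace E] {T : E →L[𝕜] E}
    (hT : ‖T‖ ≤ 1) {u : E} (hu : T u = u) : adjoint T u = u := by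
  have hnorm : ‖adjoint T u‖ ≤ ‖u‖ := by
    calc ‖adjoint T u‖ ≤ ‖adjoint T‖ * ‖u‖ := (adjoint T).le_opNorm u
      _ ≤ 1 * ‖u‖ := by rw [adjoint.norm_map]; gcongr
      _ = ‖u‖ := one_mul _
  have hinner : RCLike.re ⟪adjoint T u, u⟫_𝕜 = ‖u‖ ^ 2 := by
    rw [adjoint_inner_left, hu, inner_self_eq_norm_sq]
  have hsq : ‖adjoint T u - u‖ ^ 2 ≤ 0 := by
    rw [norm_sub_sq (𝕜 := 𝕜), hinner]
    nlinarith [norm_nonneg (adjoint T u)]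
  rw [← sub_eq_zero, ← norm_eq_zero]
  exact pow_eq_zero_iff two_ne_zero |>.1 (le_antisymm hsq (sq_nonneg _))

theorem range_le_orthogonal_ker [CompleteSpace E] {A : E →L[𝕜] E} (hA : ‖1 + A‖ ≤ 1) :
    A.range ≤ A.kerᗮ := by
  have hker : A.ker ≤ A.rangeᗮ := by
    intro u hu
    have hfix : (1 + A) u = u := by simp [show A u = 0 from hu]
    rw [orthogonal_range, LinearMap.mem_ker]
    simpa [adjoint_one] using adjoint_apply_eq_self_of_apply_eq_self hA hfix
  exact A.range.le_orthogonal_orthogonal.trans (Submodule.orthogonal_le hker)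

theorem orthogonal_ker_ne_bot [CompleteSpace E] {A : E →L[𝕜] E} (hA : A ≠ 0) :
    A.kerᗮ ≠ ⊥ := by
  rw [Ne, Submodule.orthogonal_eq_bot_iff, LinearMap.ker_eq_top]
  exact fun h => hA (coe_injective h)

theorem injective_restrict_orthogonal_ker {A : E →L[𝕜] E} (h : ∀ x ∈ A.kerᗮ, A x ∈ A.kerᗮ) :
    Function.Injective (A.restrict h) := by
  refine (injective_iff_map_eq_zero _).2 fun x hx => ?_
  have hxK : (x : E) ∈ A.ker := by simpa using congrArg Subtype.val hx
  exact Subtype.ext (Submodule.disjoint_def.1 A.ker.orthogonal_disjoint _ hxK x.2)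

variable [FiniteDimensional 𝕜 E] {A : E →L[𝕜] E}

theorem norm_one_add_eq_one_of_normingVectors_subset_ker [Nontrivial E]
    (hA : (1 + A).normingVectors ⊆ A.ker) : ‖1 + A‖ = 1 := by
  obtain ⟨u, hu⟩ := (1 + A).normingVectors_nonempty
  rw [← hu.2, _root_.add_apply, one_apply_eq_self, show A u = 0 from hA hu, add_zero, hu.1]

theorem ker_ne_bot_of_normingVectors_subset_ker [Nontrivial E]
    (hA : (1 + A).normingVectors ⊆ A.ker) : A.ker ≠ ⊥ := by
  obtain ⟨u, hu⟩ := (1 + A).normingVectors_nonempty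
  rw [Submodule.ne_bot_iff]
  exact ⟨u, hA hu, norm_ne_zero_iff.1 (hu.1 ▸ one_ne_zero)⟩

theorem norm_one_add_apply_lt_one_of_normingVectors_subset_ker
    (hA : (1 + A).normingVectors ⊆ A.ker) {x : E} (hx : x ∈ A.kerᗮ) (hx1 : ‖x‖ = 1) :
    ‖(1 + A) x‖ < 1 := by
  have : Nontrivial E := ⟨x, 0, norm_ne_zero_iff.1 (hx1 ▸ one_ne_zero)⟩
  have hnorm := norm_one_add_eq_one_of_normingVectors_subset_ker hA
  refine lt_of_le_of_ne (by simpa [hnorm, hx1] using (1 + A).le_opNorm x) fun heq => ?_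
  have hxK : x ∈ A.ker := hA ⟨hx1, heq.trans hnorm.symm⟩
  have := Submodule.disjoint_def.1 A.ker.orthogonal_disjoint _ hxK hx
  simp [this] at hx1

theorem norm_one_add_restrict_lt_one_of_normingVectors_subset_ker
    (hA : (1 + A).normingVectors ⊆ A.ker) (h : ∀ x ∈ A.kerᗮ, A x ∈ A.kerᗮ) :
    ‖1 + A.restrict h‖ < 1 := by
  refine opNorm_lt_of_forall_norm_apply_lt _ one_pos fun x hx => ?_
  rw [← Submodule.norm_coe] at hx ⊢
  simpa using norm_one_add_apply_lt_one_of_normingVectors_subset_ker hA x.2 hx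

end ContinuousLinearMap

theorem LinearMap.isUnit_det_toMatrix_of_injective {K V ι : Type*} [Field K] [AddCommGroup V]
    [Module K V] [FiniteDimensional K V] [Fintype ι] [DecidableEq ι] (b : Module.Basis ι K V)
    {f : V →ₗ[K] V} (hf : Function.Injective f) :
    IsUnit (LinearMap.toMatrix b b f).det := by
  rw [← Matrix.isUnit_iff_isUnit_det, LinearMap.isUnit_toMatrix_iff,
    LinearMap.isUnit_iff_ker_eq_bot, LinearMap.ker_eq_bot]
  exact hf

section Matrices

variable {𝕜 E ι κ : Type*} [RCLike 𝕜] [NormedAddCommGroup E] [InnerProductSpace 𝕜 E]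
  [Fintype ι] [DecidableEq ι] [Fintype κ] [DecidableEq κ]

theorem OrthonormalBasis.toEuclideanCLM_toMatrix_repr (b : OrthonormalBasis κ 𝕜 E)
    (f : E →ₗ[𝕜] E) (x : E) :
    toEuclideanCLM (𝕜 := 𝕜) (LinearMap.toMatrix b.toBasis b.toBasis f) (b.repr x) =
      b.repr (f x) := by
  ext i
  have hrepr : ⇑(b.toBasis.repr x) = (b.repr x).ofLp := funext (b.coe_toBasis_repr_apply x)
  simpa [hrepr] using congrFun (LinearMap.toMatrix_mulVec_repr b.toBasis b.toBasis f x) i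

theorem OrthonormalBasis.norm_toEuclideanCLM_toMatrix (b : OrthonormalBasis κ 𝕜 E)
    (f : E →L[𝕜] E) :
    ‖toEuclideanCLM (𝕜 := 𝕜) (LinearMap.toMatrix b.toBasis b.toBasis f)‖ = ‖f‖ := by
  have hconj : toEuclideanCLM (𝕜 := 𝕜) (LinearMap.toMatrix b.toBasis b.toBasis f) =
      (b.repr : E →L[𝕜] EuclideanSpace 𝕜 κ) ∘L f ∘L
        (b.repr.symm : EuclideanSpace 𝕜 κ →L[𝕜] E) := by
    ext1 x
    obtain ⟨y, rfl⟩ := b.repr.surjective x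
    simpa using b.toEuclideanCLM_toMatrix_repr f y
  rw [hconj, ContinuousLinearMap.opNorm_linearIsometryEquiv_comp,
    ContinuousLinearMap.opNorm_comp_linearIsometryEquiv]

theorem OrthonormalBasis.star_basisFun_toMatrix_mul_self
    (b : OrthonormalBasis ι 𝕜 (EuclideanSpace 𝕜 ι)) :
    star ((EuclideanSpace.basisFun ι 𝕜).toBasis.toMatrix b) *
      (EuclideanSpace.basisFun ι 𝕜).toBasis.toMatrix b = 1 :=
  (EuclideanSpace.basisFun ι 𝕜).toMatrix_orthonormalBasis_conjTranspose_mul_self b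

theorem OrthonormalBasis.star_basisFun_toMatrix_reindex_mul_mul
    (b : OrthonormalBasis κ 𝕜 (EuclideanSpace 𝕜 ι)) (e : κ ≃ ι) (A : Matrix ι ι 𝕜) :
    star ((EuclideanSpace.basisFun ι 𝕜).toBasis.toMatrix (b.reindex e)) * A *
        (EuclideanSpace.basisFun ι 𝕜).toBasis.toMatrix (b.reindex e) =
      Matrix.reindex e e (LinearMap.toMatrix b.toBasis b.toBasis (toEuclideanLin A)) := by
  ext i j
  simp only [OrthonormalBasis.coe_reindex, Matrix.mul_apply, star_apply,
    Module.Basis.toMatrix_apply, Function.comp_apply, OrthonormalBasis.coe_toBasis_repr_apply,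
    OrthonormalBasis.repr_apply_apply, EuclideanSpace.basisFun_apply, PiLp.inner_apply,
    PiLp.single_apply, RCLike.inner_apply, MonoidWithZeroHom.map_ite_one_zero, mul_ite, mul_one,
    mul_zero, Finset.sum_ite_eq', Finset.mem_univ, ↓reduceIte, RCLike.star_def, Finset.sum_mul,
    reindex_apply, submatrix_apply, LinearMap.toMatrix_apply, OrthonormalBasis.coe_toBasis,
    ofLp_toLpLin, toLin'_apply, mulVec, dotProduct]
  rw [Finset.sum_comm]
  exact Finset.sum_congr rfl fun _ _ => Finset.sum_congr rfl fun _ _ => by ring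

theorem Submodule.toMatrix_orthogonalDecomposition_eq_fromBlocks {K : Submodule 𝕜 E}
    [K.HasOrthogonalProjection] {k m : Type*} [Fintype k] [DecidableEq k] [Fintype m]
    [DecidableEq m] (bK : OrthonormalBasis k 𝕜 K) (bM : OrthonormalBasis m 𝕜 Kᗮ)
    (f : E →L[𝕜] E) (hK : ∀ x ∈ K, f x = 0) (hM : ∀ x ∈ Kᗮ, f x ∈ Kᗮ) :
    LinearMap.toMatrix ((bK.prod bM).map K.orthogonalDecomposition.symm).toBasis
        ((bK.prod bM).map K.orthogonalDecomposition.symm).toBasis f =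
      fromBlocks 0 0 0 (LinearMap.toMatrix bM.toBasis bM.toBasis (f.restrict hM)) := by
  ext (i | i) (j | j)
  · simp [LinearMap.toMatrix_apply, OrthonormalBasis.repr_apply_apply, hK _ (bK j).2]
  · simp [LinearMap.toMatrix_apply, OrthonormalBasis.repr_apply_apply,
      Submodule.inner_right_of_mem_orthogonal (bK i).2 (hM _ (bM j).2)]
  · simp [LinearMap.toMatrix_apply, OrthonormalBasis.repr_apply_apply, hK _ (bK j).2]
  · simp [LinearMap.toMatrix_apply, OrthonormalBasis.repr_apply_apply]

end Matrices

theorem unitary_block_decomposition_general {n : ℕ} (A : Matrix (Fin n) (Fin n) ℂ) (hA : A ≠ 0)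
    (hker : ∀ u : EuclideanSpace ℂ (Fin n), ‖u‖ = 1 →
      ‖Matrix.toEuclideanCLM (𝕜 := ℂ) (1 + A) u‖ = euclOpNorm (1 + A) →
      Matrix.toEuclideanCLM (𝕜 := ℂ) A u = 0) :
    euclOpNorm (1 + A) = 1 ∧
    ∃ (k m : ℕ) (hkm : k + m = n), 1 ≤ k ∧ 1 ≤ m ∧
      ∃ U : Matrix (Fin n) (Fin n) ℂ, star U * U = 1 ∧
        ∃ Atil : Matrix (Fin m) (Fin m) ℂ, IsUnit Atil.det ∧ euclOpNorm (1 + Atil) < 1 ∧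
          star U * A * U =
            Matrix.reindex (finSumFinEquiv.trans (finCongr hkm))
              (finSumFinEquiv.trans (finCongr hkm))
              (Matrix.fromBlocks (0 : Matrix (Fin k) (Fin k) ℂ) 0 0 Atil) := by
  set T := toEuclideanCLM (𝕜 := ℂ) A
  have hT1 : toEuclideanCLM (𝕜 := ℂ) (1 + A) = 1 + T := by rw [map_add, map_one]
  have hopNorm : euclOpNorm (1 + A) = ‖1 + T‖ := by rw [euclOpNorm, hT1]
  replace hker : (1 + T).normingVectors ⊆ T.ker := fun u hu =>
    hker u hu.1 (by rw [hT1, hopNorm]; exact hu.2)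
  have hT : T ≠ 0 := (map_ne_zero_iff _ toEuclideanCLM.injective).2 hA
  obtain ⟨x, hx⟩ := DFunLike.ne_iff.1 hT
  have : Nontrivial (EuclideanSpace ℂ (Fin n)) := nontrivial_of_ne x 0 (by rintro rfl; simp at hx)
  have hnorm := T.norm_one_add_eq_one_of_normingVectors_subset_ker hker
  have hM : ∀ x ∈ T.kerᗮ, T x ∈ T.kerᗮ := fun x _ => T.range_le_orthogonal_ker hnorm.le ⟨x, rfl⟩
  let bK := stdOrthonormalBasis ℂ T.ker
  let bM := stdOrthonormalBasis ℂ T.kerᗮ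
  have hkm := T.ker.finrank_add_finrank_orthogonal.trans finrank_euclideanSpace_fin
  let B := (bK.prod bM).map T.ker.orthogonalDecomposition.symm
  let e := finSumFinEquiv.trans (finCongr hkm)
  refine ⟨hopNorm.trans hnorm, _, _, hkm,
    Submodule.one_le_finrank_iff.2 (T.ker_ne_bot_of_normingVectors_subset_ker hker),
    Submodule.one_le_finrank_iff.2 (T.orthogonal_ker_ne_bot hT),
    (EuclideanSpace.basisFun (Fin n) ℂ).toBasis.toMatrix (B.reindex e),
    (B.reindex e).star_basisFun_toMatrix_mul_self,
    LinearMap.toMatrix bM.toBasis bM.toBasis (T.restrict hM),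
    LinearMap.isUnit_det_toMatrix_of_injective _ (T.injective_restrict_orthogonal_ker hM), ?_,
    (B.star_basisFun_toMatrix_reindex_mul_mul e A).trans (congrArg _
      (T.ker.toMatrix_orthogonalDecomposition_eq_fromBlocks bK bM T (fun _ hx => hx) hM))⟩
  rw [euclOpNorm, ← LinearMap.toMatrix_one bM.toBasis, ← map_add,
    ← ContinuousLinearMap.toLinearMap_one, ← ContinuousLinearMap.toLinearMap_add,
    bM.norm_toEuclideanCLM_toMatrix]
  exact T.norm_one_add_restrict_lt_one_of_normingVectors_subset_ker hker hM

/-- If `A ≠ 0`, `‖I + A‖ ≥ 1`, and `Au = 0` for every unit vector `u` attaining the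
operator norm of `I + A`, then `‖I + A‖ = 1` and `A` is unitarily similar to a block
diagonal matrix `0ₖ ⊕ Atil` with `1 ≤ k < n`, `Atil` invertible of size `n - k`, and
`‖I + Atil‖ < 1`. -/
theorem unitary_block_decomposition {n : ℕ} (A : Matrix (Fin n) (Fin n) ℂ) (hA : A ≠ 0)
    (h : 1 ≤ euclOpNorm (1 + A))
    (hker : ∀ u : EuclideanSpace ℂ (Fin n), ‖u‖ = 1 →
      ‖Matrix.toEuclideanCLM (𝕜 := ℂ) (1 + A) u‖ = euclOpNorm (1 + A) →
      Matrix.toEuclideanCLM (𝕜 := ℂ) A u = 0) :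
    euclOpNorm (1 + A) = 1 ∧
    ∃ (k m : ℕ) (hkm : k + m = n), 1 ≤ k ∧ 1 ≤ m ∧
      ∃ U : Matrix (Fin n) (Fin n) ℂ, star U * U = 1 ∧
        ∃ Atil : Matrix (Fin m) (Fin m) ℂ, IsUnit Atil.det ∧ euclOpNorm (1 + Atil) < 1 ∧
          star U * A * U =
            Matrix.reindex (finSumFinEquiv.trans (finCongr hkm))
              (finSumFinEquiv.trans (finCongr hkm))
              (Matrix.fromBlocks (0 : Matrix (Fin k) (Fin k) ℂ) 0 0 Atil) :=
  unitary_block_decomposition_general A hA hker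
end

section
/- Let A be an n×n complex matrix that is unitarily similar to 0_k ⊕ Ã, where 1 ≤ k < n, 0_k is the k×k zero matrix, and Ã is an invertible (n−k)×(n−k) matrix with ‖I_{n−k} + Ã‖ < 1 (operator norm induced by the Euclidean norm). Then there exists t* > 1 such that ‖I_{n−k} + t*Ã‖ = 1, the function t ↦ ‖I + tA‖ is identically equal to 1 on the interval [1, t*], and t ↦ ‖I + tA‖ is strictly increasing on [t*, ∞). -/
open Matrix

/-!
Write `g t = ‖I + t Ã‖`. The map `(B, C) ↦ U (B ⊕ C) U*` is an injective star-algebra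
homomorphism out of the product C⋆-algebra, whose norm is the maximum of the two norms; injective
star homomorphisms of C⋆-algebras are isometric, so `‖I + tA‖ = ‖(I_k, I + tÃ)‖ = max 1 (g t)`.
The function `g` is convex and continuous, `g 1 < 1`, and `g t → ∞` because `Ã ≠ 0`, so `g`
reaches `1` at some `t* > 1`. By convexity `g ≤ 1` on `[1, t*]`, and since `g 1 < g t*` every
chord starting at `1` climbs, so `g` is strictly increasing (and `≥ 1`) on `[t*, ∞)`.
-/

open Set Filter

namespace Matrix

variable (R α : Type*) [CommSemiring R] [Semiring α] [StarRing α] [Algebra R α]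
  {ι κ : Type*} [Fintype ι] [Fintype κ] [DecidableEq ι] [DecidableEq κ]

variable (ι κ) in
def fromBlocksDiagStarAlgHom : Matrix ι ι α × Matrix κ κ α →⋆ₐ[R] Matrix (ι ⊕ κ) (ι ⊕ κ) α where
  toFun p := fromBlocks p.1 0 0 p.2
  map_one' := fromBlocks_one
  map_mul' p q := by simp [fromBlocks_multiply]
  map_zero' := fromBlocks_zero
  map_add' p q := by simp [fromBlocks_add]
  commutes' r := by simp [algebraMap_eq_diagonal, fromBlocks_diagonal]
  map_star' p := by simp [star_eq_conjTranspose, fromBlocks_conjTranspose]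

theorem fromBlocksDiagStarAlgHom_injective :
    Function.Injective (fromBlocksDiagStarAlgHom R α ι κ) := fun _ _ h =>
  let ⟨h₁₁, _, _, h₂₂⟩ := fromBlocks_inj.1 h
  Prod.ext h₁₁ h₂₂

def reindexStarAlgEquiv (e : ι ≃ κ) : Matrix ι ι α ≃⋆ₐ[R] Matrix κ κ α :=
  StarAlgEquiv.ofAlgEquiv (reindexAlgEquiv R α e) fun M => by simp [star_eq_conjTranspose]

end Matrix

open scoped Matrix.Norms.L2Operator

theorem Matrix.l2_opNorm_one_add_smul_unitary_conj_fromBlocks {ι κ ν : Type*} [Fintype ι]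
    [Fintype κ] [Fintype ν] [DecidableEq ι] [DecidableEq κ] [DecidableEq ν] [Nonempty ι]
    (u : unitary (Matrix ν ν ℂ)) (e : ι ⊕ κ ≃ ν) (C : Matrix κ κ ℂ) (z : ℂ) :
    ‖1 + z • ((u : Matrix ν ν ℂ) * reindex e e (fromBlocks 0 0 0 C) * star (u : Matrix ν ν ℂ))‖
      = max 1 ‖1 + z • C‖ := by
  let φ := ((Unitary.conjStarAlgAut ℂ _ u).toStarAlgHom.comp
    (reindexStarAlgEquiv ℂ ℂ e).toStarAlgHom).comp (fromBlocksDiagStarAlgHom ℂ ℂ ι κ)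
  have hφ : Function.Injective φ :=
    (Unitary.conjStarAlgAut ℂ _ u).injective.comp <|
      (reindexStarAlgEquiv ℂ ℂ e).injective.comp (fromBlocksDiagStarAlgHom_injective ℂ ℂ)
  have hblock : 1 + z • ((u : Matrix ν ν ℂ) * reindex e e (fromBlocks 0 0 0 C) *
      star (u : Matrix ν ν ℂ)) = φ (1, 1 + z • C) := by
    change 1 + z • φ (0, C) = _
    rw [← map_one φ, ← map_smul, ← map_add]
    exact congrArg φ (Prod.ext (by simp) rfl)
  rw [hblock, NonUnitalStarAlgHom.norm_map φ hφ, Prod.norm_mk, norm_one]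

theorem convexOn_norm_add_smul {𝕜 E : Type*} [RCLike 𝕜] [NormedAddCommGroup E] [NormedSpace 𝕜 E]
    (b a : E) : ConvexOn ℝ univ fun t : ℝ => ‖b + (t : 𝕜) • a‖ := by
  refine ⟨convex_univ, fun x _ y _ p q hp hq hpq => ?_⟩
  have hsplit : b + ((p • x + q • y : ℝ) : 𝕜) • a
      = (p : 𝕜) • (b + (x : 𝕜) • a) + (q : 𝕜) • (b + (y : 𝕜) • a) := by
    have hpq' : (p : 𝕜) + q = 1 := by exact_mod_cast hpq
    simp only [smul_eq_mul, RCLike.ofReal_add, RCLike.ofReal_mul]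
    linear_combination (norm := module) -hpq' • b
  calc ‖b + ((p • x + q • y : ℝ) : 𝕜) • a‖
      ≤ ‖(p : 𝕜) • (b + (x : 𝕜) • a)‖ + ‖(q : 𝕜) • (b + (y : 𝕜) • a)‖ := by
        rw [hsplit]; exact norm_add_le _ _
    _ = p • ‖b + (x : 𝕜) • a‖ + q • ‖b + (y : 𝕜) • a‖ := by
        rw [norm_smul, norm_smul, RCLike.norm_ofReal, RCLike.norm_ofReal, abs_of_nonneg hp,
          abs_of_nonneg hq, smul_eq_mul, smul_eq_mul]

theorem tendsto_norm_add_smul_atTop {𝕜 E : Type*} [RCLike 𝕜] [NormedAddCommGroup E]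
    [NormedSpace 𝕜 E] (b : E) {a : E} (ha : a ≠ 0) :
    Tendsto (fun t : ℝ => ‖b + (t : 𝕜) • a‖) atTop atTop := by
  refine tendsto_atTop_mono' _ ?_
    (tendsto_atTop_add_const_right _ (-‖b‖) (tendsto_id.atTop_mul_const (norm_pos_iff.2 ha)))
  filter_upwards [eventually_ge_atTop 0] with t ht
  have := norm_sub_norm_le ((t : 𝕜) • a) (-b)
  rw [norm_smul, RCLike.norm_ofReal, abs_of_nonneg ht, norm_neg, sub_neg_eq_add, add_comm] at this
  simp only [id]
  linarith

theorem ConvexOn.strictMonoOn_Ici_of_lt {g : ℝ → ℝ} {a s : ℝ} (hg : ConvexOn ℝ (Ici a) g)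
    (has : a < s) (hlt : g a < g s) : StrictMonoOn g (Ici s) := by
  have climb : ∀ {x y}, a < x → x < y → g a < g x → g x < g y := fun hax hxy hx =>
    hg.lt_right_of_left_lt self_mem_Ici (hax.trans hxy).le
      (by rw [openSegment_eq_Ioo (hax.trans hxy)]; exact ⟨hax, hxy⟩) hx
  have above : ∀ x ∈ Ici s, g a < g x := fun x hx => by
    rcases (mem_Ici.1 hx).eq_or_lt with rfl | hsx
    · exact hlt
    · exact hlt.trans (climb has hsx hlt)
  exact fun x hx y _ hxy => climb (has.trans_le hx) hxy (above x hx)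

theorem ConvexOn.exists_level_crossing {g : ℝ → ℝ} {a c : ℝ} (hg : ConvexOn ℝ (Ici a) g)
    (hcont : ContinuousOn g (Ici a)) (ha : g a < c) (hT : ∃ T, a ≤ T ∧ c ≤ g T) :
    ∃ s, a < s ∧ g s = c ∧ (∀ t ∈ Icc a s, g t ≤ c) ∧ (∀ t ∈ Ici s, c ≤ g t) ∧
      StrictMonoOn g (Ici s) := by
  obtain ⟨T, haT, hcT⟩ := hT
  obtain ⟨s, hs, hgs⟩ := intermediate_value_Icc haT (hcont.mono Icc_subset_Ici_self) ⟨ha.le, hcT⟩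
  have has : a < s := hs.1.lt_of_ne (by rintro rfl; exact ha.ne hgs)
  have hmono := hg.strictMonoOn_Ici_of_lt has (hgs ▸ ha)
  refine ⟨s, has, hgs, fun t ht => ?_, fun t ht => hgs ▸ hmono.monotoneOn self_mem_Ici ht ht,
    hmono⟩
  calc g t ≤ max (g a) (g s) :=
        hg.le_on_segment self_mem_Ici has.le (by rwa [segment_eq_Icc has.le])
    _ = c := by rw [hgs, max_eq_right ha.le]

theorem norm_one_add_smul_plateau_general {n k m : ℕ} (hkm : k + m = n) (hk : 1 ≤ k) (hm : 1 ≤ m)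
    (A : Matrix (Fin n) (Fin n) ℂ) (U : Matrix (Fin n) (Fin n) ℂ) (hU : star U * U = 1)
    (Atil : Matrix (Fin m) (Fin m) ℂ)
    (hnorm : euclOpNorm (1 + Atil) < 1)
    (hsim : A = U *
      (Matrix.reindex (finSumFinEquiv.trans (finCongr hkm))
        (finSumFinEquiv.trans (finCongr hkm))
        (Matrix.fromBlocks (0 : Matrix (Fin k) (Fin k) ℂ) 0 0 Atil)) * star U) :
    ∃ tstar : ℝ, 1 < tstar ∧ euclOpNorm (1 + (tstar : ℂ) • Atil) = 1 ∧
      (∀ t : ℝ, t ∈ Set.Icc 1 tstar → euclOpNorm (1 + (t : ℂ) • A) = 1) ∧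
      StrictMonoOn (fun t : ℝ => euclOpNorm (1 + (t : ℂ) • A)) (Set.Ici tstar) := by
  have : Nonempty (Fin k) := Fin.pos_iff_nonempty.mp hk
  have : Nonempty (Fin m) := Fin.pos_iff_nonempty.mp hm
  have hblock (t : ℝ) : euclOpNorm (1 + (t : ℂ) • A) = max 1 ‖1 + (t : ℂ) • Atil‖ :=
    hsim ▸ l2_opNorm_one_add_smul_unitary_conj_fromBlocks
      ⟨U, Unitary.mem_iff.mpr ⟨hU, mul_eq_one_comm.mp hU⟩⟩ _ Atil t
  change ‖1 + Atil‖ < 1 at hnorm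
  have hAtil_ne : Atil ≠ 0 := by
    rintro rfl
    simp at hnorm
  obtain ⟨T, hT, hT1⟩ := ((tendsto_norm_add_smul_atTop (𝕜 := ℂ) 1 hAtil_ne).eventually_ge_atTop 1
    |>.and (eventually_ge_atTop 1)).exists
  obtain ⟨tstar, h1, hval, hle, hge, hmono⟩ := ConvexOn.exists_level_crossing
    ((convexOn_norm_add_smul (𝕜 := ℂ) 1 Atil).subset (subset_univ _) (convex_Ici 1))
    (by fun_prop) (by simpa using hnorm) ⟨T, hT1, hT⟩
  exact ⟨tstar, h1, hval, fun t ht => (hblock t).trans (max_eq_left (hle t ht)),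
    hmono.congr fun t ht => ((hblock t).trans (max_eq_right (hge t ht))).symm⟩

/-- If `A` is unitarily similar to `0ₖ ⊕ Atil` with `1 ≤ k < n`, `Atil` invertible and
`‖I + Atil‖ < 1`, then there is `t* > 1` with `‖I + t* Atil‖ = 1` such that
`t ↦ ‖I + tA‖` is identically `1` on `[1, t*]` and strictly increasing on `[t*, ∞)`. -/
theorem norm_one_add_smul_plateau {n k m : ℕ} (hkm : k + m = n) (hk : 1 ≤ k) (hm : 1 ≤ m)
    (A : Matrix (Fin n) (Fin n) ℂ) (U : Matrix (Fin n) (Fin n) ℂ) (hU : star U * U = 1)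
    (Atil : Matrix (Fin m) (Fin m) ℂ) (hAtil : IsUnit Atil.det)
    (hnorm : euclOpNorm (1 + Atil) < 1)
    (hsim : A = U *
      (Matrix.reindex (finSumFinEquiv.trans (finCongr hkm))
        (finSumFinEquiv.trans (finCongr hkm))
        (Matrix.fromBlocks (0 : Matrix (Fin k) (Fin k) ℂ) 0 0 Atil)) * star U) :
    ∃ tstar : ℝ, 1 < tstar ∧ euclOpNorm (1 + (tstar : ℂ) • Atil) = 1 ∧
      (∀ t : ℝ, t ∈ Set.Icc 1 tstar → euclOpNorm (1 + (t : ℂ) • A) = 1) ∧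
      StrictMonoOn (fun t : ℝ => euclOpNorm (1 + (t : ℂ) • A)) (Set.Ici tstar) :=
  norm_one_add_smul_plateau_general hkm hk hm A U hU Atil hnorm hsim
end

section
/- Let A be an n×n complex matrix with ‖I + A‖ > 1, where ‖·‖ is the operator norm induced by the Euclidean norm. Then the function t ↦ ‖I + tA‖ is strictly increasing on [1, ∞). -/
/-! A norm composed with an affine line, `t ↦ ‖x + t • y‖`, is convex; a convex function of one
variable that increases from `0` to `1` is strictly increasing on `[1, ∞)`. For `x = I` and
`y = A` the increase is `‖I‖ ≤ 1 < ‖I + A‖`. -/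

open Matrix

open Set

section NormedSpace

variable {E : Type*} [SeminormedAddCommGroup E] [NormedSpace ℝ E]

theorem convexOn_norm_add_smul_s5 (x y : E) : ConvexOn ℝ univ fun t : ℝ => ‖x + t • y‖ := by
  simpa [Function.comp_def, AffineMap.lineMap_apply, add_comm] using
    convexOn_univ_norm.comp_affineMap (AffineMap.lineMap x (x + y))

theorem strictMonoOn_norm_add_smul {x y : E} (h : ‖x‖ < ‖x + y‖) :
    StrictMonoOn (fun t : ℝ => ‖x + t • y‖) (Ici 1) := by
  simpa using (convexOn_norm_add_smul_s5 x y).strictMonoOn (mem_univ 0) one_pos (by simpa using h)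

end NormedSpace

theorem euclOpNorm_one_add_smul {n : ℕ} (A : Matrix (Fin n) (Fin n) ℂ) (t : ℝ) :
    euclOpNorm (1 + (t : ℂ) • A) = ‖1 + t • toEuclideanCLM (𝕜 := ℂ) A‖ := by
  rw [euclOpNorm, map_add, map_one, map_smul]
  rfl

/-- If `‖I + A‖ > 1`, then `t ↦ ‖I + tA‖` is strictly increasing on `[1, ∞)`. -/
theorem strictMonoOn_norm_one_add_smul_of_one_lt {n : ℕ} (A : Matrix (Fin n) (Fin n) ℂ)
    (h : 1 < euclOpNorm (1 + A)) :
    StrictMonoOn (fun t : ℝ => euclOpNorm (1 + (t : ℂ) • A)) (Set.Ici 1) := by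
  have hA : ‖(1 : EuclideanSpace ℂ (Fin n) →L[ℂ] _)‖ < ‖1 + toEuclideanCLM (𝕜 := ℂ) A‖ :=
    ContinuousLinearMap.norm_id_le.trans_lt (by simpa only [euclOpNorm, map_add, map_one] using h)
  simpa only [euclOpNorm_one_add_smul] using strictMonoOn_norm_add_smul hA
end

section
/- Let n ≥ 2, let S be an n×n irreducible column stochastic matrix, let d ∈ (0, 1], and let A = diag(a₁, …, aₙ) with all aⱼ > 0 and the aⱼ not all equal. Then the spectral radius of ((1−d)I + dS)A satisfies min_j aⱼ < ρ(((1−d)I + dS)A) < max_j aⱼ. -/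
/-!
The matrix `M = ((1 - d) I + d S) A` is nonnegative and irreducible, and its `j`-th column sum
is `aⱼ`. The spectral radius of a nonnegative matrix lies between its smallest and largest column
sums: above by the `ℓ∞` operator norm of the transpose, below by Gelfand's formula. To make the
bounds strict, irreducibility spreads the slack of a column with `aⱼ < max a` (resp. `> min a`)
to every column of a large power `Mᴺ`, and `ρ(Mᴺ) = ρ(M)ᴺ`.
-/

open Matrix

/-- The spectral radius of a real square matrix: the maximum modulus of its complex
eigenvalues. -/
noncomputable def specRad {n : ℕ} (M : Matrix (Fin n) (Fin n) ℝ) : ℝ :=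
  sSup ((fun μ => ‖μ‖) '' spectrum ℂ (M.map (fun x => (x : ℂ))))

/-- A real square matrix is column stochastic if its entries are nonnegative and each
column sums to one. -/
def ColStochastic {n : ℕ} (S : Matrix (Fin n) (Fin n) ℝ) : Prop :=
  (∀ i j, 0 ≤ S i j) ∧ ∀ j, ∑ i, S i j = 1

/-- A square matrix is irreducible if for every pair of indices `(j,k)` some positive
power has positive `(j,k)` entry. -/
def MatIrreducible {n : ℕ} (S : Matrix (Fin n) (Fin n) ℝ) : Prop :=
  ∀ j k : Fin n, ∃ p : ℕ, 0 < p ∧ 0 < (S ^ p) j k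

open scoped ENNReal

namespace Matrix

variable {ι : Type*} [Fintype ι] [DecidableEq ι] {P : Matrix ι ι ℝ}

theorem sum_pow_add_apply (P : Matrix ι ι ℝ) (p q : ℕ) (j : ι) :
    ∑ i, (P ^ (p + q)) i j = ∑ l, (∑ i, (P ^ p) i l) * (P ^ q) l j := by
  simp_rw [pow_add, mul_apply, Finset.sum_mul]
  exact Finset.sum_comm

theorem pow_le_sum_pow_apply (hP : ∀ i j, 0 ≤ P i j) {s : ℝ} (hs : 0 ≤ s)
    (h : ∀ j, s ≤ ∑ i, P i j) (k : ℕ) (j : ι) : s ^ k ≤ ∑ i, (P ^ k) i j := by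
  induction k generalizing j with
  | zero => simp [one_apply]
  | succ k ih =>
    calc s ^ (k + 1) = s ^ k * s := pow_succ s k
      _ ≤ s ^ k * ∑ l, P l j := by gcongr; exact h j
      _ ≤ ∑ l, (∑ i, (P ^ k) i l) * P l j := by
        rw [Finset.mul_sum]; gcongr with l; exacts [hP l j, ih l]
      _ = ∑ i, (P ^ (k + 1)) i j := by rw [sum_pow_add_apply, pow_one]

/- Used with `w k = cᵏ - (column sums of Pᵏ)` and with `w k = (column sums of Pᵏ) - mᵏ`:
positivity of `w 1` at `j₀` spreads along the paths of `P` starting at `j₀`. -/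
theorem exists_forall_pos_of_cocycle (hP : ∀ i j, 0 ≤ P i j) {r : ℝ} (hr : 0 < r)
    {w : ℕ → ι → ℝ} (hw : ∀ p q, w (p + q) = w p ᵥ* P ^ q + r ^ p • w q) (hw₁ : 0 ≤ w 1)
    {j₀ : ι} (hj₀ : 0 < w 1 j₀) (hreach : ∀ j, ∃ q, 0 < (P ^ q) j₀ j) :
    ∃ N, N ≠ 0 ∧ ∀ j, 0 < w N j := by
  have hnonneg : ∀ k, 0 ≤ w k := by
    intro k
    induction k with
    | zero => exact (by simpa using hw 0 0 : w 0 = 0).ge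
    | succ k ih =>
      rw [hw k 1, pow_one]
      exact add_nonneg (fun j => Finset.sum_nonneg fun i _ => mul_nonneg (ih i) (hP i j))
        (smul_nonneg (pow_nonneg hr.le k) hw₁)
  have hgrow : ∀ p q j, w p j₀ * (P ^ q) j₀ j ≤ w (p + q) j := by
    intro p q j
    rw [hw p q, Pi.add_apply, vecMul, dotProduct]
    refine le_add_of_le_of_nonneg ?_ (mul_nonneg (pow_nonneg hr.le p) (hnonneg q j))
    exact Finset.single_le_sum (f := fun i => w p i * (P ^ q) i j)
      (fun i _ => mul_nonneg (hnonneg p i) (pow_apply_nonneg hP q i j)) (Finset.mem_univ j₀)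
  have hpos : ∀ k, 0 < w (k + 1) j₀ := by
    intro k
    rw [hw k 1, Pi.add_apply, Pi.smul_apply, smul_eq_mul]
    exact add_pos_of_nonneg_of_pos (Finset.sum_nonneg fun i _ =>
      mul_nonneg (hnonneg k i) (pow_apply_nonneg hP 1 i j₀)) (mul_pos (pow_pos hr k) hj₀)
  choose q hq using hreach
  refine ⟨Finset.univ.sup q + 1, by omega, fun j => ?_⟩
  have hqj : q j ≤ Finset.univ.sup q := Finset.le_sup (Finset.mem_univ j)
  obtain ⟨k, hk⟩ : ∃ k, Finset.univ.sup q + 1 = (k + 1) + q j :=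
    ⟨Finset.univ.sup q - q j, by omega⟩
  rw [hk]
  exact (mul_pos (hpos k) (hq j)).trans_le (hgrow _ _ j)

theorem pow_apply_pos_of_forall_pos_imp {A B : Matrix ι ι ℝ} (hA : ∀ i j, 0 ≤ A i j)
    (hB : ∀ i j, 0 ≤ B i j) (hAB : ∀ i j, 0 < A i j → 0 < B i j) (k : ℕ) {i j : ι}
    (h : 0 < (A ^ k) i j) : 0 < (B ^ k) i j := by
  induction k generalizing j with
  | zero => simpa using h
  | succ k ih =>
    rw [pow_succ, mul_apply] at h ⊢
    obtain ⟨l, -, hl⟩ := (Finset.sum_pos_iff_of_nonneg fun l _ =>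
      mul_nonneg (pow_apply_nonneg hA k i l) (hA l j)).1 h
    have hAk : 0 < (A ^ k) i l :=
      (pow_apply_nonneg hA k i l).lt_of_ne' (left_ne_zero_of_mul hl.ne')
    have hAl : 0 < A l j := (hA l j).lt_of_ne' (right_ne_zero_of_mul hl.ne')
    exact (Finset.sum_pos_iff_of_nonneg fun l _ =>
      mul_nonneg (pow_apply_nonneg hB k i l) (hB l j)).2
      ⟨l, Finset.mem_univ l, mul_pos (ih hAk) (hAB l j hAl)⟩

namespace IsIrreducible

theorem of_forall_pos_imp {A B : Matrix ι ι ℝ} (hA : A.IsIrreducible)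
    (hB : ∀ i j, 0 ≤ B i j) (hAB : ∀ i j, 0 < A i j → 0 < B i j) : B.IsIrreducible :=
  (isIrreducible_iff_exists_pow_pos hB).2 fun i j =>
    let ⟨k, hk, h⟩ := (isIrreducible_iff_exists_pow_pos hA.nonneg).1 hA i j
    ⟨k, hk, pow_apply_pos_of_forall_pos_imp hA.nonneg hB hAB k h⟩

theorem exists_pos_pow_apply (hP : P.IsIrreducible) (i j : ι) : ∃ k, 0 < (P ^ k) i j :=
  let ⟨k, _, hk⟩ := (isIrreducible_iff_exists_pow_pos hP.nonneg).1 hP i j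
  ⟨k, hk⟩

theorem exists_sum_pow_apply_lt (hP : P.IsIrreducible) {c : ℝ} (hc : ∀ j, ∑ i, P i j ≤ c)
    {j₀ : ι} (hj₀ : ∑ i, P i j₀ < c) : ∃ N, N ≠ 0 ∧ ∀ j, ∑ i, (P ^ N) i j < c ^ N := by
  have hc₀ : 0 < c := (Finset.sum_nonneg fun i _ => hP.nonneg i j₀).trans_lt hj₀
  obtain ⟨N, hN, hpos⟩ := exists_forall_pos_of_cocycle (w := fun k j => c ^ k - ∑ i, (P ^ k) i j)
    hP.nonneg hc₀ (fun p q => funext fun j => by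
      simp only [sum_pow_add_apply, vecMul, dotProduct, Pi.add_apply, Pi.smul_apply, smul_eq_mul,
        sub_mul, Finset.sum_sub_distrib, ← Finset.mul_sum]
      ring)
    (fun j => by simpa using hc j) (by simpa using hj₀) (hP.exists_pos_pow_apply j₀)
  exact ⟨N, hN, fun j => sub_pos.1 (hpos j)⟩

theorem exists_lt_sum_pow_apply (hP : P.IsIrreducible) {m : ℝ} (hm : 0 < m)
    (hm' : ∀ j, m ≤ ∑ i, P i j) {j₀ : ι} (hj₀ : m < ∑ i, P i j₀) :
    ∃ N, N ≠ 0 ∧ ∀ j, m ^ N < ∑ i, (P ^ N) i j := by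
  obtain ⟨N, hN, hpos⟩ := exists_forall_pos_of_cocycle (w := fun k j => ∑ i, (P ^ k) i j - m ^ k)
    hP.nonneg hm (fun p q => funext fun j => by
      simp only [sum_pow_add_apply, vecMul, dotProduct, Pi.add_apply, Pi.smul_apply, smul_eq_mul,
        sub_mul, Finset.sum_sub_distrib, ← Finset.mul_sum]
      ring)
    (fun j => by simpa using hm' j) (by simpa using hj₀) (hP.exists_pos_pow_apply j₀)
  exact ⟨N, hN, fun j => sub_pos.1 (hpos j)⟩

end IsIrreducible

end Matrix

theorem spectrum.spectralRadius_pow {A : Type*} [NormedRing A] [NormedAlgebra ℂ A]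
    [CompleteSpace A] [Nontrivial A] (a : A) (n : ℕ) :
    spectralRadius ℂ (a ^ n) = spectralRadius ℂ a ^ n := by
  refine le_antisymm ?_ (spectralRadius_pow_le' a n)
  rw [spectralRadius, spectrum.map_pow]
  refine iSup₂_le ?_
  rintro _ ⟨z, hz, rfl⟩
  rw [nnnorm_pow, ENNReal.coe_pow]
  exact pow_le_pow_left' (le_iSup₂ (f := fun k (_ : k ∈ spectrum ℂ a) => (‖k‖₊ : ℝ≥0∞)) z hz) n

namespace Matrix

variable {ι : Type*} [Fintype ι] [DecidableEq ι] {P : Matrix ι ι ℝ}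

theorem spectrum_transpose {K : Type*} [Field K] (A : Matrix ι ι K) :
    spectrum K Aᵀ = spectrum K A := by
  ext μ
  simp only [mem_spectrum_iff_isRoot_charpoly, charpoly_transpose]

theorem spectralRadius_transpose (A : Matrix ι ι ℂ) :
    spectralRadius ℂ Aᵀ = spectralRadius ℂ A := by
  rw [spectralRadius, spectralRadius, spectrum_transpose]

theorem map_ofReal_pow (P : Matrix ι ι ℝ) (k : ℕ) :
    (P ^ k).map Complex.ofReal = P.map Complex.ofReal ^ k :=
  Matrix.map_pow P Complex.ofRealHom k

section LinftyOpNorm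

attribute [local instance] Matrix.linftyOpNormedRing Matrix.linftyOpNormedAlgebra

theorem linfty_opNNNorm_transpose_map_ofReal (hP : ∀ i j, 0 ≤ P i j) :
    ‖(P.map Complex.ofReal)ᵀ‖₊ = Finset.univ.sup fun j => (∑ i, P i j).toNNReal := by
  rw [linfty_opNNNorm_def]
  refine Finset.sup_congr rfl fun j _ => ?_
  rw [Real.toNNReal_sum_of_nonneg fun i _ => hP i j]
  refine Finset.sum_congr rfl fun i _ => ?_
  rw [transpose_apply, map_apply, Complex.nnnorm_real, Real.nnnorm_of_nonneg (hP i j),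
    Real.toNNReal_of_nonneg (hP i j)]

variable [Nonempty ι]

theorem spectralRadius_map_ofReal_lt_of_forall_sum_lt (hP : ∀ i j, 0 ≤ P i j) {t : ℝ}
    (ht : 0 < t) (h : ∀ j, ∑ i, P i j < t) :
    spectralRadius ℂ (P.map Complex.ofReal) < ENNReal.ofReal t := by
  rw [← spectralRadius_transpose]
  refine (spectrum.spectralRadius_le_nnnorm _).trans_lt (ENNReal.coe_lt_coe.2 ?_)
  rw [linfty_opNNNorm_transpose_map_ofReal hP, Finset.sup_lt_iff (by simpa using ht)]
  exact fun j _ => (Real.toNNReal_lt_toNNReal_iff ht).2 (h j)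

theorem ofReal_le_spectralRadius_map_ofReal_of_forall_le_sum (hP : ∀ i j, 0 ≤ P i j) {s : ℝ}
    (hs : 0 ≤ s) (h : ∀ j, s ≤ ∑ i, P i j) :
    ENNReal.ofReal s ≤ spectralRadius ℂ (P.map Complex.ofReal) := by
  rw [← spectralRadius_transpose]
  refine ge_of_tendsto (spectrum.pow_nnnorm_pow_one_div_tendsto_nhds_spectralRadius _)
    (Filter.eventually_atTop.2 ⟨1, fun k hk => ?_⟩)
  have hnorm : ENNReal.ofReal (s ^ k) ≤ ‖(P.map Complex.ofReal)ᵀ ^ k‖₊ := by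
    rw [← transpose_pow, ← map_ofReal_pow, linfty_opNNNorm_transpose_map_ofReal
      (pow_apply_nonneg hP k), ENNReal.ofReal, ENNReal.coe_le_coe]
    exact Finset.le_sup_of_le (Finset.mem_univ (Classical.arbitrary ι))
      (Real.toNNReal_le_toNNReal (pow_le_sum_pow_apply hP hs h k _))
  calc ENNReal.ofReal s = ENNReal.ofReal (s ^ k) ^ (1 / k : ℝ) := by
        rw [ENNReal.ofReal_pow hs, one_div, ENNReal.pow_rpow_inv_natCast (by omega)]
    _ ≤ _ := ENNReal.rpow_le_rpow hnorm (by positivity)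

namespace IsIrreducible

theorem spectralRadius_map_ofReal_lt (hP : P.IsIrreducible) {c : ℝ}
    (hc : ∀ j, ∑ i, P i j ≤ c) {j₀ : ι} (hj₀ : ∑ i, P i j₀ < c) :
    spectralRadius ℂ (P.map Complex.ofReal) < ENNReal.ofReal c := by
  have hc₀ : 0 < c := (Finset.sum_nonneg fun i _ => hP.nonneg i j₀).trans_lt hj₀
  obtain ⟨N, hN, hlt⟩ := hP.exists_sum_pow_apply_lt hc hj₀
  rw [← ENNReal.pow_lt_pow_left_iff hN, ← spectrum.spectralRadius_pow,
    ← map_ofReal_pow, ← ENNReal.ofReal_pow hc₀.le]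
  exact spectralRadius_map_ofReal_lt_of_forall_sum_lt (pow_apply_nonneg hP.nonneg N)
    (pow_pos hc₀ N) hlt

theorem ofReal_lt_spectralRadius_map_ofReal (hP : P.IsIrreducible) {m : ℝ}
    (hm : 0 < m) (hm' : ∀ j, m ≤ ∑ i, P i j) {j₀ : ι} (hj₀ : m < ∑ i, P i j₀) :
    ENNReal.ofReal m < spectralRadius ℂ (P.map Complex.ofReal) := by
  obtain ⟨N, hN, hlt⟩ := hP.exists_lt_sum_pow_apply hm hm' hj₀
  obtain ⟨j₁, hj₁⟩ := Finite.exists_min fun j => ∑ i, (P ^ N) i j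
  rw [← ENNReal.pow_lt_pow_left_iff hN, ← spectrum.spectralRadius_pow,
    ← map_ofReal_pow, ← ENNReal.ofReal_pow hm.le]
  exact ((ENNReal.ofReal_lt_ofReal_iff_of_nonneg (pow_nonneg hm.le N)).2 (hlt j₁)).trans_le
    (ofReal_le_spectralRadius_map_ofReal_of_forall_le_sum (pow_apply_nonneg hP.nonneg N)
      ((pow_pos hm N).trans (hlt j₁)).le hj₁)

end IsIrreducible

end LinftyOpNorm

end Matrix

section LinftyOpNorm

attribute [local instance] Matrix.linftyOpNormedRing Matrix.linftyOpNormedAlgebra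

theorem ofReal_specRad {n : ℕ} [NeZero n] (M : Matrix (Fin n) (Fin n) ℝ) :
    ENNReal.ofReal (specRad M) = spectralRadius ℂ (M.map Complex.ofReal) := by
  obtain ⟨z, hz, hzρ⟩ := spectrum.exists_nnnorm_eq_spectralRadius (M.map Complex.ofReal)
  have hsup : specRad M = ‖z‖ := by
    refine IsGreatest.csSup_eq ⟨⟨z, hz, rfl⟩, ?_⟩
    rintro _ ⟨w, hw, rfl⟩
    have : (‖w‖₊ : ℝ≥0∞) ≤ ‖z‖₊ := hzρ ▸
      le_iSup₂ (f := fun k (_ : k ∈ spectrum ℂ (M.map Complex.ofReal)) => (‖k‖₊ : ℝ≥0∞)) w hw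
    exact_mod_cast this
  rw [hsup, ofReal_norm, enorm_eq_nnnorm, hzρ]

end LinftyOpNorm

namespace Matrix.IsIrreducible

variable {n : ℕ} {P : Matrix (Fin n) (Fin n) ℝ}

theorem specRad_lt (hP : P.IsIrreducible) {c : ℝ} (hc : ∀ j, ∑ i, P i j ≤ c) {j₀ : Fin n}
    (hj₀ : ∑ i, P i j₀ < c) : specRad P < c := by
  have : NeZero n := ⟨j₀.pos.ne'⟩
  have h := hP.spectralRadius_map_ofReal_lt hc hj₀
  rw [← ofReal_specRad] at h
  exact (ENNReal.ofReal_lt_ofReal_iff'.1 h).1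

theorem lt_specRad (hP : P.IsIrreducible) {m : ℝ} (hm : 0 < m) (hm' : ∀ j, m ≤ ∑ i, P i j)
    {j₀ : Fin n} (hj₀ : m < ∑ i, P i j₀) : m < specRad P := by
  have : NeZero n := ⟨j₀.pos.ne'⟩
  have h := hP.ofReal_lt_spectralRadius_map_ofReal hm hm' hj₀
  rw [← ofReal_specRad] at h
  exact (ENNReal.ofReal_lt_ofReal_iff'.1 h).1

end Matrix.IsIrreducible

section Damped

variable {n : ℕ} {S : Matrix (Fin n) (Fin n) ℝ} {d : ℝ} {a : Fin n → ℝ}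

theorem damped_mul_diagonal_apply (i j : Fin n) :
    (((1 - d) • 1 + d • S) * diagonal a) i j =
      ((1 - d) * (1 : Matrix (Fin n) (Fin n) ℝ) i j + d * S i j) * a j := by
  simp [mul_diagonal]

theorem ColStochastic.sum_damped_mul_diagonal_apply (hS : ColStochastic S) (j : Fin n) :
    ∑ i, (((1 - d) • 1 + d • S) * diagonal a) i j = a j := by
  simp [← Finset.sum_mul, Finset.sum_add_distrib, ← Finset.mul_sum, hS.2 j, one_apply]

theorem MatIrreducible.isIrreducible_damped_mul_diagonal (hirr : MatIrreducible S)
    (hS : ColStochastic S) (hd₀ : 0 < d) (hd₁ : d ≤ 1) (ha : ∀ j, 0 < a j) :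
    (((1 - d) • 1 + d • S) * diagonal a).IsIrreducible := by
  have hS_irr : S.IsIrreducible :=
    (isIrreducible_iff_exists_pow_pos hS.1).2 fun i j => let ⟨p, hp, h⟩ := hirr i j; ⟨p, hp, h⟩
  have hdiag : ∀ i j, 0 ≤ (1 - d) * (1 : Matrix (Fin n) (Fin n) ℝ) i j := fun i j =>
    mul_nonneg (sub_nonneg.2 hd₁) (by rw [one_apply]; split_ifs <;> norm_num)
  refine hS_irr.of_forall_pos_imp (fun i j => ?_) (fun i j h => ?_) <;>
    rw [damped_mul_diagonal_apply]
  · exact mul_nonneg (add_nonneg (hdiag i j) (mul_nonneg hd₀.le (hS.1 i j))) (ha j).le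
  · exact mul_pos (add_pos_of_nonneg_of_pos (hdiag i j) (mul_pos hd₀ h)) (ha j)

end Damped

/-- If `S` is irreducible column stochastic, `d ∈ (0,1]`, and `A = diag(a₁,…,aₙ)` has
positive, not all equal, diagonal entries, then
`min_j aⱼ < ρ(((1−d)I + dS)A) < max_j aⱼ`. -/
theorem specRad_between_min_max {n : ℕ} (hn : 2 ≤ n)
    (S : Matrix (Fin n) (Fin n) ℝ) (hS : ColStochastic S) (hirr : MatIrreducible S)
    (d : ℝ) (hd0 : 0 < d) (hd1 : d ≤ 1)
    (a : Fin n → ℝ) (ha : ∀ j, 0 < a j) (hns : ∃ j k, a j ≠ a k) :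
    Finset.univ.inf' (Finset.univ_nonempty_iff.mpr ⟨⟨0, by omega⟩⟩) a <
      specRad (((1 - d) • 1 + d • S) * Matrix.diagonal a) ∧
    specRad (((1 - d) • 1 + d • S) * Matrix.diagonal a) <
      Finset.univ.sup' (Finset.univ_nonempty_iff.mpr ⟨⟨0, by omega⟩⟩) a := by
  obtain ⟨j, k, hjk⟩ : ∃ j k, a j < a k := by
    obtain ⟨j, k, hjk⟩ := hns
    exact hjk.lt_or_gt.elim (fun h => ⟨j, k, h⟩) (fun h => ⟨k, j, h⟩)
  have hM := hirr.isIrreducible_damped_mul_diagonal hS hd0 hd1 ha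
  have hsum := hS.sum_damped_mul_diagonal_apply (d := d) (a := a)
  refine ⟨hM.lt_specRad ((Finset.lt_inf'_iff _).2 fun i _ => ha i)
    (fun i => (hsum i).symm ▸ Finset.inf'_le _ (Finset.mem_univ i)) (j₀ := k) ?_,
    hM.specRad_lt (fun i => (hsum i).symm ▸ Finset.le_sup' _ (Finset.mem_univ i)) (j₀ := j) ?_⟩
  · rw [hsum]; exact (Finset.inf'_le _ (Finset.mem_univ j)).trans_lt hjk
  · rw [hsum]; exact hjk.trans_le (Finset.le_sup' _ (Finset.mem_univ k))
end

section
/- Let n ≥ 2, let S be an n×n irreducible column stochastic matrix such that RSR⁻¹ is symmetric for some invertible diagonal matrix R, and let A = diag(a₁, …, aₙ) with all aⱼ > 0 and the aⱼ not all equal (A non-scalar). For d ∈ [0, 1] write S(d) = (1−d)I + dS. Then for every d̃ ∈ (0, 1], the spectral radius satisfies ρ(S(d̃)A⁻¹S(d̃)A) > 1. (Ecologically: if the resident population is sedentary, so that the two seasonal fitness matrices are A and A⁻¹, then every dispersing mutant phenotype d̃ > 0 can invade.) -/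
/-!
Write `P = S(d̃)`, `R = diag r`, `A = diag a` and `D = A^{1/2}`. The matrix `B = R P R⁻¹` is
symmetric, so `P A⁻¹ P A` is similar to `R P A⁻¹ P A R⁻¹ = B A⁻¹ B A` and then to `XᵀX` with
`X = D⁻¹ B D`; hence `ρ = ‖X‖²`. Since the columns of `P` sum to one, `w = D⁻¹ R⁻¹ 𝟙` satisfies
`X w = w`. If `ρ ≤ 1`, then `I - XᵀX` is positive semidefinite and `wᵀ(I - XᵀX)w = 0`, so
`Xᵀ w = w`, which unwinds to `a⁻¹ P = a⁻¹` for the row vector `a⁻¹`. By the minimum principle an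
irreducible column-stochastic matrix fixes only constant row vectors, so `A` would be scalar.
-/

open Matrix

namespace Matrix

section Diagonal

variable {ι K : Type*} [Fintype ι] [DecidableEq ι] [Field K]

theorem vecMul_diagonal_eq_mul (v e : ι → K) : v ᵥ* diagonal e = v * e :=
  funext (vecMul_diagonal v e)

theorem diagonal_mulVec_eq_mul (e v : ι → K) : diagonal e *ᵥ v = e * v :=
  funext (mulVec_diagonal e v)

theorem diagonal_mul_diagonal_inv {v : ι → K} (hv : ∀ i, v i ≠ 0) :
    diagonal v * diagonal v⁻¹ = 1 := by
  rw [diagonal_mul_diagonal, ← diagonal_one]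
  exact congrArg diagonal (funext fun i => mul_inv_cancel₀ (hv i))

theorem diagonal_inv_mul_diagonal {v : ι → K} (hv : ∀ i, v i ≠ 0) :
    diagonal v⁻¹ * diagonal v = 1 := by
  rw [(commute_diagonal _ _).eq, diagonal_mul_diagonal_inv hv]

theorem inv_diagonal_of_ne_zero {v : ι → K} (hv : ∀ i, v i ≠ 0) :
    (diagonal v)⁻¹ = diagonal v⁻¹ :=
  inv_eq_right_inv (diagonal_mul_diagonal_inv hv)

theorem diagonal_conj_mul {e : ι → K} (he : ∀ i, e i ≠ 0) (M N : Matrix ι ι K) :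
    diagonal e * (M * N) * diagonal e⁻¹ =
      (diagonal e * M * diagonal e⁻¹) * (diagonal e * N * diagonal e⁻¹) := by
  simp only [Matrix.mul_assoc]
  rw [← Matrix.mul_assoc (diagonal e⁻¹), diagonal_inv_mul_diagonal he, Matrix.one_mul]

theorem diagonal_conj_diagonal {e : ι → K} (he : ∀ i, e i ≠ 0) (v : ι → K) :
    diagonal e * diagonal v * diagonal e⁻¹ = diagonal v := by
  rw [(commute_diagonal e v).eq, Matrix.mul_assoc, diagonal_mul_diagonal_inv he, Matrix.mul_one]

theorem diagonal_mul_mul_diagonal_mulVec (e f v : ι → K) (M : Matrix ι ι K) :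
    (diagonal e * M * diagonal f) *ᵥ v = e * (M *ᵥ (f * v)) := by
  rw [← mulVec_mulVec, ← mulVec_mulVec, diagonal_mulVec_eq_mul, diagonal_mulVec_eq_mul]

theorem vecMul_diagonal_mul_mul_diagonal_eq_self_iff {e f : ι → K} (hef : e * f = 1)
    (v : ι → K) (M : Matrix ι ι K) :
    v ᵥ* (diagonal e * M * diagonal f) = v ↔ (v * e) ᵥ* M = v * e := by
  rw [← vecMul_vecMul, ← vecMul_vecMul, vecMul_diagonal_eq_mul, vecMul_diagonal_eq_mul]
  constructor
  · intro h
    rw [← mul_one ((v * e) ᵥ* M), ← hef, mul_comm e, ← mul_assoc, h]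
  · intro h
    rw [h, mul_assoc, hef, mul_one]

theorem transpose_mul_self_diagonal_conj {B : Matrix ι ι K} (hB : B.IsSymm) {s : ι → K}
    (hs : ∀ i, s i ≠ 0) :
    (diagonal s⁻¹ * B * diagonal s)ᵀ * (diagonal s⁻¹ * B * diagonal s) =
      diagonal s * (B * diagonal (s * s)⁻¹ * (B * diagonal (s * s))) * diagonal s⁻¹ := by
  have hmul : ∀ v w : ι → K, diagonal (v * w) = diagonal v * diagonal w :=
    fun v w => (diagonal_mul_diagonal v w).symm
  rw [transpose_mul, transpose_mul, diagonal_transpose, diagonal_transpose, hB.eq, mul_inv,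
    hmul, hmul]
  simp only [Matrix.mul_assoc]
  rw [diagonal_mul_diagonal_inv hs, Matrix.mul_one]

end Diagonal

section Nonnegative

variable {ι R : Type*} [Fintype ι] [DecidableEq ι] [Semiring R]

theorem pow_apply_le_pow_apply [PartialOrder R] [IsOrderedRing R] {A B : Matrix ι ι R}
    (hB : ∀ i j, 0 ≤ B i j) (hBA : ∀ i j, B i j ≤ A i j) (p : ℕ) (i j : ι) :
    (B ^ p) i j ≤ (A ^ p) i j := by
  induction p generalizing j with
  | zero => rfl
  | succ p ih =>
    rw [pow_succ, pow_succ, mul_apply, mul_apply]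
    exact Finset.sum_le_sum fun k _ => mul_le_mul (ih k) (hBA k j) (hB k j)
      ((pow_apply_nonneg hB p i k).trans (ih k))

theorem vecMul_pow_eq_self {M : Matrix ι ι R} {z : ι → R} (hz : z ᵥ* M = z) (p : ℕ) :
    z ᵥ* M ^ p = z := by
  induction p with
  | zero => simp
  | succ p ih => rw [pow_succ, ← vecMul_vecMul, ih, hz]

end Nonnegative

section Lazy

variable {ι : Type*} [Fintype ι] [DecidableEq ι]

/-- The matrix `S(d)` of the paper. -/
def lazy (d : ℝ) (S : Matrix ι ι ℝ) : Matrix ι ι ℝ :=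
  (1 - d) • 1 + d • S

theorem lazy_mem_colStochastic {S : Matrix ι ι ℝ} (hS : S ∈ colStochastic ℝ ι) {d : ℝ}
    (hd0 : 0 ≤ d) (hd1 : d ≤ 1) : lazy d S ∈ colStochastic ℝ ι :=
  convex_colStochastic (one_mem _) hS (by linarith) hd0 (by ring)

theorem IsSymm.lazy {S : Matrix ι ι ℝ} {r : ι → ℝ} (hr : ∀ i, r i ≠ 0)
    (hsym : (diagonal r * S * diagonal r⁻¹).IsSymm) (d : ℝ) :
    (diagonal r * lazy d S * diagonal r⁻¹).IsSymm := by
  rw [Matrix.lazy, mul_add, add_mul, mul_smul_comm, smul_mul_assoc, mul_one,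
    diagonal_mul_diagonal_inv hr, mul_smul_comm, smul_mul_assoc]
  exact (isSymm_one.smul _).add (hsym.smul _)

end Lazy

end Matrix

namespace MatIrreducible

variable {n : ℕ}

theorem lazy {S : Matrix (Fin n) (Fin n) ℝ} (hirr : MatIrreducible S) (hS : ∀ i j, 0 ≤ S i j)
    {d : ℝ} (hd0 : 0 < d) (hd1 : d ≤ 1) : MatIrreducible (Matrix.lazy d S) := by
  intro j k
  obtain ⟨p, hp, hpos⟩ := hirr j k
  refine ⟨p, hp, lt_of_lt_of_le ?_ (pow_apply_le_pow_apply (B := d • S) ?_ ?_ p j k)⟩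
  · rw [smul_pow, Matrix.smul_apply, smul_eq_mul]
    exact mul_pos (pow_pos hd0 p) hpos
  · intro i l
    exact mul_nonneg hd0.le (hS i l)
  · intro i l
    have h1 : (0 : ℝ) ≤ (1 : Matrix (Fin n) (Fin n) ℝ) i l := by
      rw [one_apply]; split_ifs <;> norm_num
    simp only [Matrix.lazy, Matrix.add_apply, Matrix.smul_apply, smul_eq_mul]
    exact le_add_of_nonneg_left (mul_nonneg (by linarith) h1)

theorem eq_of_vecMul_eq_self {P : Matrix (Fin n) (Fin n) ℝ} (hirr : MatIrreducible P)
    (hP : P ∈ colStochastic ℝ (Fin n)) {z : Fin n → ℝ} (hz : z ᵥ* P = z) (i j : Fin n) :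
    z i = z j := by
  obtain ⟨k, -, hk⟩ := Finset.univ.exists_min_image z ⟨i, Finset.mem_univ _⟩
  suffices h : ∀ l, z l = z k from (h i).trans (h j).symm
  intro l
  obtain ⟨p, -, hpos⟩ := hirr l k
  have hPp := pow_mem hP p
  have hfix : ∑ m, (P ^ p) m k * z m = z k := by
    simpa only [vecMul, dotProduct, mul_comm] using congrFun (vecMul_pow_eq_self hz p) k
  -- `z k` is a weighted average of the values `z m ≥ z k`, with weight `(P ^ p) l k > 0` at `l`
  have hsum : ∑ m, (P ^ p) m k * (z m - z k) = 0 := by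
    simp only [mul_sub, Finset.sum_sub_distrib, ← Finset.sum_mul,
      sum_col_of_mem_colStochastic hPp, one_mul, hfix, sub_self]
  have hterm := (Finset.sum_eq_zero_iff_of_nonneg fun m _ =>
    mul_nonneg (hPp.1 m k) (sub_nonneg.2 (hk m (Finset.mem_univ _)))).1 hsum l (Finset.mem_univ _)
  rcases mul_eq_zero.1 hterm with h | h
  · exact absurd h hpos.ne'
  · linarith

end MatIrreducible

namespace Matrix

variable {n : ℕ}

theorem specRad_units_conj (U : (Matrix (Fin n) (Fin n) ℝ)ˣ) (M : Matrix (Fin n) (Fin n) ℝ) :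
    specRad ((U : Matrix (Fin n) (Fin n) ℝ) * M * (↑U⁻¹ : Matrix (Fin n) (Fin n) ℝ)) =
      specRad M := by
  let f : Matrix (Fin n) (Fin n) ℝ →+* Matrix (Fin n) (Fin n) ℂ := Complex.ofRealHom.mapMatrix
  let Uc := Units.map f.toMonoidHom U
  have h : ((U : Matrix (Fin n) (Fin n) ℝ) * M * (↑U⁻¹ : Matrix (Fin n) (Fin n) ℝ)).map
      (fun x => (x : ℂ)) =
      (Uc : Matrix (Fin n) (Fin n) ℂ) * M.map (fun x => (x : ℂ)) *
        (↑Uc⁻¹ : Matrix (Fin n) (Fin n) ℂ) := by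
    simp only [Uc, Units.coe_map, Units.coe_map_inv]
    exact (map_mul f _ _).trans (congrArg (· * _) (map_mul f _ _))
  unfold specRad
  rw [h, spectrum.units_conjugate]

theorem specRad_diagonal_conj {e : Fin n → ℝ} (he : ∀ i, e i ≠ 0)
    (M : Matrix (Fin n) (Fin n) ℝ) : specRad (diagonal e * M * diagonal e⁻¹) = specRad M :=
  specRad_units_conj
    ⟨diagonal e, diagonal e⁻¹, diagonal_mul_diagonal_inv he, diagonal_inv_mul_diagonal he⟩ M

theorem ofReal_mem_spectrum_map {M : Matrix (Fin n) (Fin n) ℝ} {μ : ℝ}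
    (h : μ ∈ spectrum ℝ M) : (μ : ℂ) ∈ spectrum ℂ (M.map (fun x => (x : ℂ))) := by
  have hmap : algebraMap ℂ _ (μ : ℂ) - M.map (fun x => (x : ℂ)) =
      Complex.ofRealHom.mapMatrix (algebraMap ℝ (Matrix (Fin n) (Fin n) ℝ) μ - M) := by
    rw [map_sub, algebraMap_eq_diagonal, algebraMap_eq_diagonal, RingHom.mapMatrix_apply,
      diagonal_map (map_zero _)]
    rfl
  rw [spectrum.mem_iff, isUnit_iff_isUnit_det] at h ⊢
  rwa [hmap, ← RingHom.map_det, isUnit_map_iff]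

theorem abs_le_specRad {M : Matrix (Fin n) (Fin n) ℝ} {μ : ℝ} (h : μ ∈ spectrum ℝ M) :
    |μ| ≤ specRad M := by
  rw [← Real.norm_eq_abs, ← Complex.norm_real]
  exact le_csSup ((finite_spectrum _).image _).bddAbove ⟨_, ofReal_mem_spectrum_map h, rfl⟩

theorem IsHermitian.posSemidef_one_sub {G : Matrix (Fin n) (Fin n) ℝ} (hG : G.IsHermitian)
    (hρ : specRad G ≤ 1) : (1 - G).PosSemidef := by
  refine posSemidef_iff_isHermitian_and_spectrum_nonneg.2 ⟨isHermitian_one.sub hG, ?_⟩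
  rw [← map_one (algebraMap ℝ (Matrix (Fin n) (Fin n) ℝ)), ← spectrum.singleton_sub_eq]
  rintro _ ⟨_, rfl, μ, hμ, rfl⟩
  simp only [Set.mem_ofPred_eq, sub_nonneg]
  exact (abs_le.1 ((abs_le_specRad hμ).trans hρ)).2

theorem vecMul_eq_self_of_mulVec_eq_self {X : Matrix (Fin n) (Fin n) ℝ} {w : Fin n → ℝ}
    (hXw : X *ᵥ w = w) (hρ : specRad (Xᵀ * X) ≤ 1) : w ᵥ* X = w := by
  have hG : (Xᵀ * X).IsHermitian := by
    simpa [conjTranspose_eq_transpose_of_trivial] using isHermitian_conjTranspose_mul_self X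
  have hzero : star w ⬝ᵥ ((1 - Xᵀ * X) *ᵥ w) = 0 := by
    rw [star_trivial, sub_mulVec, one_mulVec, ← mulVec_mulVec, hXw, dotProduct_sub,
      dotProduct_mulVec, vecMul_transpose, hXw, sub_self]
  have hker := ((hG.posSemidef_one_sub hρ).dotProduct_mulVec_zero_iff w).1 hzero
  rw [sub_mulVec, one_mulVec, ← mulVec_mulVec, hXw, mulVec_transpose, sub_eq_zero] at hker
  exact hker.symm

theorem vecMul_inv_eq_self_of_specRad_le_one {P : Matrix (Fin n) (Fin n) ℝ}
    (hP : 1 ᵥ* P = 1) {r : Fin n → ℝ} (hr : ∀ i, r i ≠ 0)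
    (hsym : (diagonal r * P * diagonal r⁻¹).IsSymm) {a : Fin n → ℝ} (ha : ∀ i, 0 < a i)
    (hρ : specRad (P * diagonal a⁻¹ * (P * diagonal a)) ≤ 1) : a⁻¹ ᵥ* P = a⁻¹ := by
  set B := diagonal r * P * diagonal r⁻¹ with hB
  set s : Fin n → ℝ := fun i => √(a i)
  have hs : ∀ i, s i ≠ 0 := fun i => (Real.sqrt_pos.2 (ha i)).ne'
  have hss : s * s = a := funext fun i => Real.mul_self_sqrt (ha i).le
  have hr1 : r * r⁻¹ = 1 := funext fun i => mul_inv_cancel₀ (hr i)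
  have hs1 : s * s⁻¹ = 1 := funext fun i => mul_inv_cancel₀ (hs i)
  set X := diagonal s⁻¹ * B * diagonal s with hX
  have hconj : diagonal r * (P * diagonal a⁻¹ * (P * diagonal a)) * diagonal r⁻¹ =
      B * diagonal a⁻¹ * (B * diagonal a) := by
    rw [diagonal_conj_mul hr, diagonal_conj_mul hr, diagonal_conj_mul hr,
      diagonal_conj_diagonal hr, diagonal_conj_diagonal hr]
  have hρX : specRad (Xᵀ * X) ≤ 1 := by
    rwa [transpose_mul_self_diagonal_conj hsym hs, hss, specRad_diagonal_conj hs, ← hconj,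
      specRad_diagonal_conj hr]
  have hfixB : B *ᵥ r⁻¹ = r⁻¹ := by
    rw [← hsym.eq, mulVec_transpose, hB, vecMul_diagonal_mul_mul_diagonal_eq_self_iff hr1,
      mul_comm, hr1, hP]
  have hfixX : X *ᵥ (s⁻¹ * r⁻¹) = s⁻¹ * r⁻¹ := by
    rw [hX, diagonal_mul_mul_diagonal_mulVec, ← mul_assoc, hs1, one_mul, hfixB]
  have h := vecMul_eq_self_of_mulVec_eq_self hfixX hρX
  rw [hX, vecMul_diagonal_mul_mul_diagonal_eq_self_iff (by rw [mul_comm, hs1]), hB,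
    vecMul_diagonal_mul_mul_diagonal_eq_self_iff hr1] at h
  have hw : s⁻¹ * r⁻¹ * s⁻¹ * r = a⁻¹ := by
    rw [← hss, mul_inv, mul_right_comm _ _ s⁻¹, mul_assoc, mul_comm r⁻¹, hr1, mul_one]
  rwa [hw] at h

end Matrix

theorem sedentary_invadable_general {n : ℕ}
    (S : Matrix (Fin n) (Fin n) ℝ) (hS : ColStochastic S) (hirr : MatIrreducible S)
    (r : Fin n → ℝ) (hr : ∀ i, r i ≠ 0)
    (hsym : (Matrix.diagonal r * S * (Matrix.diagonal r)⁻¹).IsSymm)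
    (a : Fin n → ℝ) (ha : ∀ j, 0 < a j) (hns : ∃ j k, a j ≠ a k) :
    ∀ dt : ℝ, 0 < dt → dt ≤ 1 →
      1 < specRad (((1 - dt) • 1 + dt • S) * (Matrix.diagonal a)⁻¹ *
        (((1 - dt) • 1 + dt • S) * Matrix.diagonal a)) := by
  intro dt hdt0 hdt1
  have hP : lazy dt S ∈ colStochastic ℝ (Fin n) :=
    lazy_mem_colStochastic (mem_colStochastic_iff_sum.2 hS) hdt0.le hdt1
  rw [inv_diagonal_of_ne_zero hr] at hsym
  rw [inv_diagonal_of_ne_zero fun j => (ha j).ne']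
  by_contra! hρ
  have hfix := vecMul_inv_eq_self_of_specRad_le_one hP.2 hr (hsym.lazy hr dt) ha hρ
  obtain ⟨j, k, hjk⟩ := hns
  exact hjk (inv_injective ((hirr.lazy hS.1 hdt0 hdt1).eq_of_vecMul_eq_self hP hfix j k))

/-- If the seasonal fitness matrices of a sedentary resident are `A` and `A⁻¹` with `A`
diagonal, positive and non-scalar, and `S` is irreducible column stochastic and diagonally
similar to a symmetric matrix, then every mutant with dispersal rate `d̃ ∈ (0,1]` invades:
`ρ(S(d̃)A⁻¹S(d̃)A) > 1`. -/
theorem sedentary_invadable {n : ℕ} (hn : 2 ≤ n)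
    (S : Matrix (Fin n) (Fin n) ℝ) (hS : ColStochastic S) (hirr : MatIrreducible S)
    (r : Fin n → ℝ) (hr : ∀ i, r i ≠ 0)
    (hsym : (Matrix.diagonal r * S * (Matrix.diagonal r)⁻¹).IsSymm)
    (a : Fin n → ℝ) (ha : ∀ j, 0 < a j) (hns : ∃ j k, a j ≠ a k) :
    ∀ dt : ℝ, 0 < dt → dt ≤ 1 →
      1 < specRad (((1 - dt) • 1 + dt • S) * (Matrix.diagonal a)⁻¹ *
        (((1 - dt) • 1 + dt • S) * Matrix.diagonal a)) :=
  sedentary_invadable_general S hS hirr r hr hsym a ha hns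
end

section
/- Consider the periodically forced Beverton–Holt model on n patches with period-2 intrinsic fitnesses λ_t^j > 0 (t = 1, 2; j = 1, …, n, indices t taken modulo 2), competition intensity a > 0, uniform dispersal (S_{kj} = 1/n), and full dispersal d = 1, so that the dynamics are x^j(t+1) = (1/n)∑_{k=1}^n λ_t^k x^k(t)/(1 + a x^k(t)). Let λ̄_t = (1/n)∑_{j=1}^n λ_t^j and suppose λ̄₁λ̄₂ > 1. Then x̂^j(t) = (λ̄₁λ̄₂ − 1)/(a(1 + λ̄_t)) defines an entrywise positive period-2 orbit of these dynamics: x̂^j(t+1) = (1/n)∑_{k=1}^n λ_t^k x̂^k(t)/(1 + a x̂^k(t)) for t = 1, 2. -/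
open Matrix

lemma bh_key (a L M : ℝ) (ha : 0 < a) (hL : 0 < L) (hM : 0 < M)
    (_hp : 1 < L * M) :
    (L * M - 1) / (a * (1 + M)) =
      L * ((L * M - 1) / (a * (1 + L))) / (1 + a * ((L * M - 1) / (a * (1 + L)))) := by
  have hL1 : (1 : ℝ) + L ≠ 0 := by positivity
  have hM1 : (1 : ℝ) + M ≠ 0 := by positivity
  have ha' : a ≠ 0 := ne_of_gt ha
  have h1 : 1 + a * ((L * M - 1) / (a * (1 + L))) = L * (1 + M) / (1 + L) := by
    field_simp
    ring
  rw [h1]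
  have hLM : L * (1 + M) ≠ 0 := by positivity
  field_simp

/-- The periodically forced Beverton–Holt model on `n` patches with full, uniform
dispersal (`d = 1`, `S_{kj} = 1/n`): the point
`x̂ʲ(t) = (λ̄₁λ̄₂ − 1)/(a(1 + λ̄ₜ))` is an entrywise positive period-2 orbit of
`xʲ(t+1) = (1/n)∑ₖ λₜᵏ xᵏ(t)/(1 + a xᵏ(t))`, indices `t` modulo 2. -/
theorem bevertonHolt_periodic_orbit {n : ℕ} (hn : 0 < n) (a : ℝ) (ha : 0 < a)
    (lam : Fin 2 → Fin n → ℝ) (hlam : ∀ t j, 0 < lam t j)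
    (lbar : Fin 2 → ℝ) (hlbar : ∀ t, lbar t = (∑ j, lam t j) / n)
    (hpersist : 1 < lbar 0 * lbar 1)
    (xhat : Fin 2 → Fin n → ℝ)
    (hxhat : ∀ t j, xhat t j = (lbar 0 * lbar 1 - 1) / (a * (1 + lbar t))) :
    (∀ t j, 0 < xhat t j) ∧
    (∀ t : Fin 2, ∀ j, xhat (t + 1) j =
      (1 / n) * ∑ k, lam t k * xhat t k / (1 + a * xhat t k)) := by
  have hnR : (0 : ℝ) < (n : ℝ) := by exact_mod_cast hn
  have hnR' : (n : ℝ) ≠ 0 := ne_of_gt hnR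
  have hl : ∀ t, 0 < lbar t := by
    intro t
    rw [hlbar t]
    have : 0 < ∑ j, lam t j :=
      Finset.sum_pos (fun j _ => hlam t j) (by simpa using Finset.univ_nonempty_iff.2 ⟨⟨0, hn⟩⟩)
    positivity
  constructor
  · intro t j
    rw [hxhat t j]
    have h1 : 0 < lbar 0 * lbar 1 - 1 := by linarith
    have h2 : 0 < a * (1 + lbar t) := by
      have := hl t; positivity
    positivity
  · intro t j
    have hsum : ∑ k, lam t k * xhat t k / (1 + a * xhat t k)
        = (lbar t * n) * (xhat t j / (1 + a * xhat t j)) := by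
      have hx : ∀ k, xhat t k = xhat t j := fun k => by rw [hxhat, hxhat]
      calc ∑ k, lam t k * xhat t k / (1 + a * xhat t k)
          = ∑ k, lam t k * (xhat t j / (1 + a * xhat t j)) := by
            apply Finset.sum_congr rfl
            intro k _
            rw [hx k, mul_div_assoc]
        _ = (∑ k, lam t k) * (xhat t j / (1 + a * xhat t j)) := by
            rw [Finset.sum_mul]
        _ = (lbar t * n) * (xhat t j / (1 + a * xhat t j)) := by
            rw [hlbar t]; field_simp
    rw [hsum]
    have : (1 / (n : ℝ)) * ((lbar t * n) * (xhat t j / (1 + a * xhat t j)))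
        = lbar t * xhat t j / (1 + a * xhat t j) := by
      rw [mul_div_assoc]
      generalize xhat t j / (1 + a * xhat t j) = X
      field_simp
    rw [this, hxhat (t + 1) j, hxhat t j]
    fin_cases t
    · have := bh_key a (lbar 0) (lbar 1) ha (hl 0) (hl 1) hpersist
      simpa [mul_comm] using this
    · have := bh_key a (lbar 1) (lbar 0) ha (hl 1) (hl 0) (by rwa [mul_comm])
      simpa [mul_comm, show ((1 : Fin 2) + 1) = 0 from rfl] using this
end

section
/- Let 0 < λ_bad < λ_good with λ_good·λ_bad > 1, and consider n ≥ 2 patches whose period-2 intrinsic fitnesses satisfy λ_t^j ∈ {λ_good, λ_bad}, λ₁^j ≠ λ₂^j for every j (each patch alternates between good and bad years), and λ₁^j ≠ λ₁^k for some pair j, k (spatial asynchrony). Let a > 0, λ̄_t = (1/n)∑_j λ_t^j, let x̂^j(t) = (λ̄₁λ̄₂ − 1)/(a(1 + λ̄_t)) be the period-2 orbit of the fully dispersive phenotype (d = 1) with uniform dispersal S_{kj} = 1/n, and let F_t be the diagonal matrix with entries (F_t)_{jj} = λ_t^j/(1 + a x̂^j(t)). Then: (1) for every patch j, (F₁)_{jj}(F₂)_{jj}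 = λ_good·λ_bad/(λ̄₁λ̄₂) < 1, so every patch is a sink; and (2) for every d̃ ∈ [0, 1), the spectral radius ρ(S(d̃)F₂S(d̃)F₁) < 1, where S(d̃) = (1−d̃)I + d̃S; hence d = 1 is an evolutionarily stable strategy. -/
/-!
Along the orbit of the fully dispersive phenotype the fitness in patch `j` in year `t` is
`λ_t^j c_t` with `c₀ c₁ = 1 / (λ̄₀ λ̄₁)`. Every patch therefore has two-year growth
`λ_good λ_bad / (λ̄₀ λ̄₁)`, which is below one because `λ̄₀ + λ̄₁ = λ_good + λ_bad` with both means
strictly between `λ_bad` and `λ_good`.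

For the invasion rate, write `f_t` for the diagonal of `F_t`. If `S(d) F₁ S(d) F₀ x = μ x`, the
symmetry of `S(d)` gives `μ ∑ f₀ |x|² = ∑ f₁ |S(d) F₀ x|²`; convexity of `|·|²` and Cauchy–Schwarz
bound the right side by `((1 - d) κ + d f̄₀ f̄₁) ∑ f₀ |x|²`, where `κ ≥ f₀ f₁` pointwise. Here
`κ = λ_good λ_bad / (λ̄₀ λ̄₁) < 1` and `f̄₀ f̄₁ = 1`, so `|μ| ≤ (1 - d) κ + d < 1`.
-/

open Matrix

open Complex

theorem Matrix.exists_mulVec_eq_smul_of_mem_spectrum {K ι : Type*} [Field K] [Fintype ι]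
    [DecidableEq ι] {A : Matrix ι ι K} {μ : K} (h : μ ∈ spectrum K A) :
    ∃ x ≠ 0, A *ᵥ x = μ • x := by
  rw [← Matrix.spectrum_toLin', ← Module.End.hasEigenvalue_iff_mem_spectrum] at h
  obtain ⟨x, hx⟩ := h.exists_hasEigenvector
  exact ⟨x, hx.2, by simpa using hx.apply_eq_smul⟩

theorem specRad_le_of_eigenpair_norm_le {n : ℕ} {M : Matrix (Fin n) (Fin n) ℝ} {c : ℝ}
    (hc : 0 ≤ c) (h : ∀ (μ : ℂ) (x : Fin n → ℂ), x ≠ 0 → M.map ofReal *ᵥ x = μ • x → ‖μ‖ ≤ c) :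
    specRad M ≤ c := by
  refine Real.sSup_le ?_ hc
  rintro _ ⟨μ, hμ, rfl⟩
  obtain ⟨x, hx, hμx⟩ := exists_mulVec_eq_smul_of_mem_spectrum hμ
  exact h μ x hx hμx

theorem norm_sq_convex_comb_le (a b : ℂ) {d : ℝ} (hd₀ : 0 ≤ d) (hd₁ : d ≤ 1) :
    ‖(1 - d) * a + d * b‖ ^ 2 ≤ (1 - d) * ‖a‖ ^ 2 + d * ‖b‖ ^ 2 := by
  simp only [Complex.sq_norm, Complex.normSq_apply, Complex.add_re, Complex.add_im,
    Complex.mul_re, Complex.mul_im, Complex.ofReal_re, Complex.ofReal_im, Complex.sub_re,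
    Complex.sub_im, Complex.one_re, Complex.one_im]
  nlinarith [mul_nonneg (mul_nonneg hd₀ (sub_nonneg.2 hd₁))
    (add_nonneg (sq_nonneg (a.re - b.re)) (sq_nonneg (a.im - b.im)))]

theorem norm_sum_mul_sq_le {ι : Type*} (s : Finset ι) {f : ι → ℝ} (hf : ∀ i, 0 ≤ f i) (x : ι → ℂ) :
    ‖∑ i ∈ s, f i * x i‖ ^ 2 ≤ (∑ i ∈ s, f i) * ∑ i ∈ s, f i * ‖x i‖ ^ 2 := by
  have hnorm : ‖∑ i ∈ s, f i * x i‖ ≤ ∑ i ∈ s, f i * ‖x i‖ := by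
    refine (norm_sum_le _ _).trans_eq (Finset.sum_congr rfl fun i _ => ?_)
    rw [norm_mul, Complex.norm_real, Real.norm_of_nonneg (hf i)]
  calc ‖∑ i ∈ s, f i * x i‖ ^ 2 ≤ (∑ i ∈ s, f i * ‖x i‖) ^ 2 := by gcongr
    _ ≤ _ := Finset.sum_sq_le_sum_mul_sum_of_sq_le_mul s (fun i _ => hf i)
        (fun i _ => mul_nonneg (hf i) (sq_nonneg _)) (fun i _ => le_of_eq (by ring))

theorem Matrix.IsHermitian.eigenvalue_mul_sum_eq {ι : Type*} [Fintype ι] [DecidableEq ι]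
    {A : Matrix ι ι ℂ} (hA : A.IsHermitian) (f₀ f₁ : ι → ℝ) {μ : ℂ} {x : ι → ℂ}
    (hx : (A * diagonal (fun j => (f₁ j : ℂ)) * (A * diagonal (fun j => (f₀ j : ℂ)))) *ᵥ x =
      μ • x) :
    μ * ((∑ j, f₀ j * ‖x j‖ ^ 2 : ℝ) : ℂ) =
      ((∑ j, f₁ j * ‖(A *ᵥ (fun j => f₀ j * x j)) j‖ ^ 2 : ℝ) : ℂ) := by
  set u : ι → ℂ := fun j => f₀ j * x j
  set w := A *ᵥ u
  have key : star u ⬝ᵥ (A *ᵥ (fun j => f₁ j * w j)) = star w ⬝ᵥ (fun j => f₁ j * w j) := by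
    rw [dotProduct_mulVec, star_mulVec, hA.eq]
  have hAx : (A *ᵥ (fun j => f₁ j * w j)) = μ • x := by
    have hD (f : ι → ℝ) (v : ι → ℂ) : diagonal (fun j => (f j : ℂ)) *ᵥ v = fun j => f j * v j :=
      funext fun j => mulVec_diagonal _ _ _
    simp only [← hx, ← mulVec_mulVec, hD, w, u]
  rw [hAx] at key
  push_cast
  calc μ * ∑ j, (f₀ j : ℂ) * (‖x j‖ : ℂ) ^ 2 = star u ⬝ᵥ (μ • x) := by
        simp only [dotProduct, Finset.mul_sum]
        refine Finset.sum_congr rfl fun j _ => ?_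
        simp only [u, Pi.star_apply, Pi.smul_apply, smul_eq_mul, star_mul', Complex.star_def,
          Complex.conj_ofReal]
        linear_combination -(μ * f₀ j) * Complex.conj_mul' (x j)
    _ = star w ⬝ᵥ (fun j => f₁ j * w j) := key
    _ = ∑ j, (f₁ j : ℂ) * (‖w j‖ : ℂ) ^ 2 := by
        refine Finset.sum_congr rfl fun j _ => ?_
        simp only [Pi.star_apply, Complex.star_def]
        linear_combination (f₁ j : ℂ) * Complex.conj_mul' (w j)

section Dispersal

variable {n : ℕ} {S : Matrix (Fin n) (Fin n) ℝ} (hS : ∀ k j, S k j = 1 / n) (d : ℝ)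
include hS

theorem dispersal_map_mulVec_apply (v : Fin n → ℂ) (k : Fin n) :
    (((1 - d) • 1 + d • S).map ofReal *ᵥ v) k = (1 - d) * v k + d * ((∑ j, v j) / n) := by
  have hSv : (S.map ofReal *ᵥ v) k = (∑ j, v j) / n := by
    simp [mulVec, dotProduct, hS, div_eq_inv_mul, Finset.mul_sum]
  rw [Matrix.map_add _ ofReal_add, Matrix.map_smul' _ _ _ ofReal_mul,
    Matrix.map_smul' _ _ _ ofReal_mul]
  simp [add_mulVec, smul_mulVec, hSv]

theorem dispersal_map_isHermitian : (((1 - d) • 1 + d • S).map ofReal).IsHermitian := by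
  ext i j
  simp [hS, one_apply, eq_comm]

theorem sum_mul_norm_dispersal_mulVec_sq_le {f₀ f₁ : Fin n → ℝ} (hf₀ : ∀ j, 0 ≤ f₀ j)
    (hf₁ : ∀ j, 0 ≤ f₁ j) {κ : ℝ} (hκ : ∀ j, f₀ j * f₁ j ≤ κ) (hd₀ : 0 ≤ d) (hd₁ : d ≤ 1)
    (x : Fin n → ℂ) :
    ∑ j, f₁ j * ‖(((1 - d) • 1 + d • S).map ofReal *ᵥ (fun j => f₀ j * x j)) j‖ ^ 2 ≤
      ((1 - d) * κ + d * ((∑ j, f₀ j) / n * ((∑ j, f₁ j) / n))) * ∑ j, f₀ j * ‖x j‖ ^ 2 := by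
  set u : Fin n → ℂ := fun j => f₀ j * x j
  set Q := ∑ j, f₀ j * ‖x j‖ ^ 2
  have hlocal : ∑ j, f₁ j * ‖u j‖ ^ 2 ≤ κ * Q := by
    rw [Finset.mul_sum]
    refine Finset.sum_le_sum fun j _ => ?_
    have hj : f₁ j * ‖u j‖ ^ 2 = (f₀ j * f₁ j) * (f₀ j * ‖x j‖ ^ 2) := by
      simp only [u, norm_mul, Complex.norm_real, Real.norm_of_nonneg (hf₀ j)]
      ring
    rw [hj]
    exact mul_le_mul_of_nonneg_right (hκ j) (mul_nonneg (hf₀ j) (sq_nonneg _))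
  have hmean : ‖(∑ j, u j) / n‖ ^ 2 ≤ (∑ j, f₀ j) * Q / n ^ 2 := by
    rw [norm_div, div_pow, Complex.norm_natCast]
    exact div_le_div_of_nonneg_right (norm_sum_mul_sq_le _ hf₀ x) (by positivity)
  calc ∑ j, f₁ j * ‖(((1 - d) • 1 + d • S).map ofReal *ᵥ u) j‖ ^ 2
      ≤ ∑ j, f₁ j * ((1 - d) * ‖u j‖ ^ 2 + d * ‖(∑ j, u j) / n‖ ^ 2) := by
        refine Finset.sum_le_sum fun j _ => mul_le_mul_of_nonneg_left ?_ (hf₁ j)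
        rw [dispersal_map_mulVec_apply hS]
        exact norm_sq_convex_comb_le _ _ hd₀ hd₁
    _ = (1 - d) * ∑ j, f₁ j * ‖u j‖ ^ 2 + d * (∑ j, f₁ j) * ‖(∑ j, u j) / n‖ ^ 2 := by
        simp only [mul_add, Finset.sum_add_distrib, Finset.mul_sum, Finset.sum_mul]
        congr 1 <;> exact Finset.sum_congr rfl fun j _ => by ring
    _ ≤ (1 - d) * (κ * Q) + d * (∑ j, f₁ j) * ((∑ j, f₀ j) * Q / n ^ 2) :=
        add_le_add (mul_le_mul_of_nonneg_left hlocal (sub_nonneg.2 hd₁))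
          (mul_le_mul_of_nonneg_left hmean (mul_nonneg hd₀ (Finset.sum_nonneg fun j _ => hf₁ j)))
    _ = _ := by ring

theorem specRad_dispersal_mul_diagonal_le {f₀ f₁ : Fin n → ℝ} (hf₀ : ∀ j, 0 < f₀ j)
    (hf₁ : ∀ j, 0 ≤ f₁ j) {κ : ℝ} (hκ₀ : 0 ≤ κ) (hκ : ∀ j, f₀ j * f₁ j ≤ κ) (hd₀ : 0 ≤ d)
    (hd₁ : d ≤ 1) :
    specRad (((1 - d) • 1 + d • S) * diagonal f₁ * (((1 - d) • 1 + d • S) * diagonal f₀)) ≤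
      (1 - d) * κ + d * ((∑ j, f₀ j) / n * ((∑ j, f₁ j) / n)) := by
  have hc : 0 ≤ (1 - d) * κ + d * ((∑ j, f₀ j) / n * ((∑ j, f₁ j) / n)) := by
    have := Finset.sum_nonneg fun j (_ : j ∈ Finset.univ) => (hf₀ j).le
    have := Finset.sum_nonneg fun j (_ : j ∈ Finset.univ) => hf₁ j
    have := sub_nonneg.2 hd₁
    positivity
  refine specRad_le_of_eigenpair_norm_le hc fun μ x hx hμx => ?_
  have hmap (M N : Matrix (Fin n) (Fin n) ℝ) : (M * N).map ofReal = M.map ofReal * N.map ofReal :=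
    Matrix.map_mul (f := ofRealHom)
  simp only [hmap, diagonal_map ofReal_zero] at hμx
  have hQ : 0 < ∑ j, f₀ j * ‖x j‖ ^ 2 := by
    obtain ⟨j, hj⟩ := Function.ne_iff.mp hx
    exact Finset.sum_pos' (fun i _ => mul_nonneg (hf₀ i).le (sq_nonneg _))
      ⟨j, Finset.mem_univ _, mul_pos (hf₀ j) (pow_pos (norm_pos_iff.2 hj) 2)⟩
  have heq := congrArg norm ((dispersal_map_isHermitian hS d).eigenvalue_mul_sum_eq f₀ f₁ hμx)
  rw [norm_mul, Complex.norm_real, Complex.norm_real, Real.norm_of_nonneg hQ.le,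
    Real.norm_of_nonneg (Finset.sum_nonneg fun j _ => mul_nonneg (hf₁ j) (sq_nonneg _))] at heq
  refine le_of_mul_le_mul_right ?_ hQ
  rw [heq]
  exact sum_mul_norm_dispersal_mulVec_sq_le hS d (fun j => (hf₀ j).le) hf₁ hκ hd₀ hd₁ x

theorem specRad_dispersal_mul_diagonal_lt_one {f₀ f₁ : Fin n → ℝ} (hf₀ : ∀ j, 0 < f₀ j)
    (hf₁ : ∀ j, 0 ≤ f₁ j) {κ : ℝ} (hκ₀ : 0 ≤ κ) (hκ₁ : κ < 1) (hκ : ∀ j, f₀ j * f₁ j ≤ κ)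
    (hmean : (∑ j, f₀ j) / n * ((∑ j, f₁ j) / n) ≤ 1) (hd₀ : 0 ≤ d) (hd₁ : d < 1) :
    specRad (((1 - d) • 1 + d • S) * diagonal f₁ * (((1 - d) • 1 + d • S) * diagonal f₀)) < 1 :=
  calc _ ≤ (1 - d) * κ + d * ((∑ j, f₀ j) / n * ((∑ j, f₁ j) / n)) :=
        specRad_dispersal_mul_diagonal_le hS d hf₀ hf₁ hκ₀ hκ hd₀ hd₁.le
    _ ≤ (1 - d) * κ + d * 1 := by gcongr
    _ < 1 := by nlinarith

end Dispersal

theorem mul_eq_and_add_eq_of_ne {x y g b : ℝ} (hx : x = g ∨ x = b) (hy : y = g ∨ y = b)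
    (hxy : x ≠ y) : x * y = g * b ∧ x + y = g + b := by
  rcases hx with rfl | rfl <;> rcases hy with rfl | rfl <;>
    first | exact absurd rfl hxy | exact ⟨by ring, by ring⟩

theorem sum_div_lt_of_forall_le_of_exists_lt {n : ℕ} {f : Fin n → ℝ} {c : ℝ}
    (hle : ∀ j, f j ≤ c) (hlt : ∃ j, f j < c) : (∑ j, f j) / n < c := by
  obtain ⟨j, hj⟩ := hlt
  rw [div_lt_iff₀ (Nat.cast_pos.2 j.pos)]
  calc ∑ j, f j < ∑ _j : Fin n, c :=
        Finset.sum_lt_sum (fun i _ => hle i) ⟨j, Finset.mem_univ _, hj⟩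
    _ = c * n := by simp [mul_comm]

section AlternatingLandscape

variable {n : ℕ} {lg lb : ℝ} {lam : Fin 2 → Fin n → ℝ}
  (hval : ∀ t j, lam t j = lg ∨ lam t j = lb) (halt : ∀ j, lam 0 j ≠ lam 1 j)
include hval halt

theorem alternating_mean_add_mean (hn : n ≠ 0) :
    (∑ j, lam 0 j) / n + (∑ j, lam 1 j) / n = lg + lb := by
  rw [← add_div, ← Finset.sum_add_distrib,
    Finset.sum_congr rfl fun j _ => (mul_eq_and_add_eq_of_ne (hval 0 j) (hval 1 j) (halt j)).2]
  simp only [Finset.sum_const, Finset.card_univ, Fintype.card_fin, nsmul_eq_mul]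
  field_simp

variable (hlbg : lb < lg) (hasync : ∃ j k, lam 0 j ≠ lam 0 k)
include hlbg hasync

theorem alternating_mean_mem_Ioo (t : Fin 2) : (∑ j, lam t j) / n ∈ Set.Ioo lb lg := by
  have hbounds t j : lb ≤ lam t j ∧ lam t j ≤ lg := by
    rcases hval t j with h | h <;> rw [h] <;> constructor <;> linarith
  have hpair j := mul_eq_and_add_eq_of_ne (hval 0 j) (hval 1 j) (halt j)
  obtain ⟨j₀, k₀, hj₀k₀⟩ := hasync
  have hspread : (∃ j, lam 0 j < lg) ∧ ∃ j, lam 1 j < lg := by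
    rcases hj₀k₀.lt_or_gt with h | h
    · exact ⟨⟨j₀, h.trans_le (hbounds 0 k₀).2⟩, k₀, by linarith [(hpair k₀).2, (hbounds 0 j₀).1]⟩
    · exact ⟨⟨k₀, h.trans_le (hbounds 0 j₀).2⟩, j₀, by linarith [(hpair j₀).2, (hbounds 0 k₀).1]⟩
  have hlt₀ := sum_div_lt_of_forall_le_of_exists_lt (fun j => (hbounds 0 j).2) hspread.1
  have hlt₁ := sum_div_lt_of_forall_le_of_exists_lt (fun j => (hbounds 1 j).2) hspread.2
  have hsum := alternating_mean_add_mean hval halt j₀.pos.ne'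
  revert t
  exact Fin.forall_fin_two.2 ⟨⟨by linarith, hlt₀⟩, ⟨by linarith, hlt₁⟩⟩

theorem alternating_mul_lt_mean_mul_mean :
    lg * lb < (∑ j, lam 0 j) / n * ((∑ j, lam 1 j) / n) := by
  obtain ⟨h₀b, h₀g⟩ := alternating_mean_mem_Ioo hval halt hlbg hasync 0
  obtain ⟨j₀, -⟩ := hasync
  rw [eq_sub_of_add_eq' (alternating_mean_add_mean hval halt j₀.pos.ne')]
  nlinarith [mul_pos (sub_pos.2 h₀b) (sub_pos.2 h₀g)]

end AlternatingLandscape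

/-- The factor `1 / (1 + a x̂(t))` along the period-2 orbit of the fully dispersive phenotype,
in terms of the mean fitnesses `L t = λ̄_t`. -/
noncomputable def orbitFactor (L : Fin 2 → ℝ) (t : Fin 2) : ℝ :=
  (1 + L t) / (L t + L 0 * L 1)

section OrbitFactor

variable {L : Fin 2 → ℝ} (hL : ∀ t, 0 < L t)
include hL

theorem orbitFactor_pos (t : Fin 2) : 0 < orbitFactor L t :=
  div_pos (by linarith [hL t]) (by nlinarith [hL t, hL 0, hL 1])

theorem one_add_mul_orbit_eq {a : ℝ} (ha : a ≠ 0) (t : Fin 2) :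
    1 + a * ((L 0 * L 1 - 1) / (a * (1 + L t))) = (orbitFactor L t)⁻¹ := by
  have : 1 + L t ≠ 0 := by linarith [hL t]
  have : L t + L 0 * L 1 ≠ 0 := by nlinarith [hL t, hL 0, hL 1]
  unfold orbitFactor
  field_simp
  ring

theorem orbitFactor_zero_mul_one : orbitFactor L 0 * orbitFactor L 1 = 1 / (L 0 * L 1) := by
  have := hL 0
  have := hL 1
  unfold orbitFactor
  field_simp

end OrbitFactor

theorem full_dispersal_ESS_general {n : ℕ}
    (lg lb : ℝ) (hlb : 0 < lb) (hlbg : lb < lg)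
    (a : ℝ) (ha : 0 < a)
    (lam : Fin 2 → Fin n → ℝ)
    (hval : ∀ t j, lam t j = lg ∨ lam t j = lb)
    (halt : ∀ j, lam 0 j ≠ lam 1 j)
    (hasync : ∃ j k, lam 0 j ≠ lam 0 k)
    (lbar : Fin 2 → ℝ) (hlbar : ∀ t, lbar t = (∑ j, lam t j) / n)
    (xhat : Fin 2 → Fin n → ℝ)
    (hxhat : ∀ t j, xhat t j = (lbar 0 * lbar 1 - 1) / (a * (1 + lbar t)))
    (S : Matrix (Fin n) (Fin n) ℝ) (hS : ∀ k j, S k j = 1 / n)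
    (F : Fin 2 → Matrix (Fin n) (Fin n) ℝ)
    (hF : ∀ t, F t = Matrix.diagonal fun j => lam t j / (1 + a * xhat t j)) :
    (∀ j, (F 0).diag j * (F 1).diag j = lg * lb / (lbar 0 * lbar 1) ∧
      lg * lb / (lbar 0 * lbar 1) < 1) ∧
    (∀ dt : ℝ, 0 ≤ dt → dt < 1 →
      specRad (((1 - dt) • 1 + dt • S) * F 1 * (((1 - dt) • 1 + dt • S) * F 0)) < 1) := by
  have hLpos t : 0 < lbar t :=
    hlb.trans (hlbar t ▸ alternating_mean_mem_Ioo hval halt hlbg hasync t).1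
  have hsink : lg * lb < lbar 0 * lbar 1 :=
    hlbar 0 ▸ hlbar 1 ▸ alternating_mul_lt_mean_mul_mean hval halt hlbg hasync
  have hc := orbitFactor_zero_mul_one hLpos
  have hFc t : F t = diagonal fun j => lam t j * orbitFactor lbar t := by
    simp only [hF, hxhat, one_add_mul_orbit_eq hLpos ha.ne', div_inv_eq_mul]
  have hprod j : lam 0 j * orbitFactor lbar 0 * (lam 1 j * orbitFactor lbar 1) =
      lg * lb / (lbar 0 * lbar 1) := by
    rw [mul_mul_mul_comm, (mul_eq_and_add_eq_of_ne (hval 0 j) (hval 1 j) (halt j)).1, hc,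
      mul_one_div]
  have hf t j : 0 < lam t j * orbitFactor lbar t := by
    refine mul_pos ?_ (orbitFactor_pos hLpos t)
    rcases hval t j with h | h <;> rw [h] <;> linarith
  have hκ : lg * lb / (lbar 0 * lbar 1) < 1 := (div_lt_one (mul_pos (hLpos 0) (hLpos 1))).2 hsink
  refine ⟨fun j => ⟨by rw [hFc, hFc, diag_diagonal, diag_diagonal]; exact hprod j, hκ⟩,
    fun dt hdt₀ hdt₁ => ?_⟩
  obtain ⟨j₀, -⟩ := hasync
  rw [hFc, hFc]
  refine specRad_dispersal_mul_diagonal_lt_one hS dt (hf 0) (fun j => (hf 1 j).le)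
    (hprod j₀ ▸ mul_pos (hf 0 j₀) (hf 1 j₀)).le hκ (fun j => (hprod j).le) (le_of_eq ?_)
    hdt₀ hdt₁
  rw [← Finset.sum_mul, ← Finset.sum_mul, mul_div_right_comm, ← hlbar, mul_div_right_comm,
    ← hlbar, mul_mul_mul_comm, hc, mul_one_div_cancel (mul_pos (hLpos 0) (hLpos 1)).ne']

/-- In a Beverton–Holt landscape where each patch alternates between a good year
(`λ_good`) and a bad year (`λ_bad`), with some spatial asynchrony and
`λ_good λ_bad > 1`: along the period-2 orbit of the fully dispersive phenotype
every patch is a sink (the product of within-patch fitnesses equals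
`λ_good λ_bad/(λ̄₁λ̄₂) < 1`), and every mutant dispersal rate `d̃ ∈ [0,1)` has invasion
rate below one, so full dispersal `d = 1` is an ESS. -/
theorem full_dispersal_ESS {n : ℕ} (hn : 2 ≤ n)
    (lg lb : ℝ) (hlb : 0 < lb) (hlbg : lb < lg) (hgm : 1 < lg * lb)
    (a : ℝ) (ha : 0 < a)
    (lam : Fin 2 → Fin n → ℝ)
    (hval : ∀ t j, lam t j = lg ∨ lam t j = lb)
    (halt : ∀ j, lam 0 j ≠ lam 1 j)
    (hasync : ∃ j k, lam 0 j ≠ lam 0 k)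
    (lbar : Fin 2 → ℝ) (hlbar : ∀ t, lbar t = (∑ j, lam t j) / n)
    (xhat : Fin 2 → Fin n → ℝ)
    (hxhat : ∀ t j, xhat t j = (lbar 0 * lbar 1 - 1) / (a * (1 + lbar t)))
    (S : Matrix (Fin n) (Fin n) ℝ) (hS : ∀ k j, S k j = 1 / n)
    (F : Fin 2 → Matrix (Fin n) (Fin n) ℝ)
    (hF : ∀ t, F t = Matrix.diagonal fun j => lam t j / (1 + a * xhat t j)) :
    (∀ j, (F 0).diag j * (F 1).diag j = lg * lb / (lbar 0 * lbar 1) ∧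
      lg * lb / (lbar 0 * lbar 1) < 1) ∧
    (∀ dt : ℝ, 0 ≤ dt → dt < 1 →
      specRad (((1 - dt) • 1 + dt • S) * F 1 * (((1 - dt) • 1 + dt • S) * F 0)) < 1) :=
  full_dispersal_ESS_general lg lb hlb hlbg a ha lam hval halt hasync lbar hlbar xhat hxhat S hS F
    hF
end

section
/- Consider the periodically forced Beverton–Holt model on n ≥ 2 patches with period-2 intrinsic fitnesses λ_t^j > 0, a > 0, λ̄_t = (1/n)∑_j λ_t^j, λ̄₁λ̄₂ > 1, uniform dispersal S_{kj} = 1/n, and the period-2 orbit x̂^j(t) = (λ̄₁λ̄₂ − 1)/(a(1 + λ̄_t)) of the fully dispersive phenotype d = 1. Let F_t be the diagonal matrix with entries (F_t)_{jj} = λ_t^j/(1 + a x̂^j(t)); assume F₁ ≠ F₂ and that F_t is non-scalar for some t. If d = 1 is a Nash equilibrium, i.e. the spectral radius ρ(S(d̃)F₂S(d̃)F₁) ≤ 1 for every d̃ ∈ [0, 1] where S(d̃) = (1−d̃)I + d̃S, then λ₁^j λ₂^j ≤ λ̄₁λ̄₂ for every patch j, and the inequality is strict for at least one j. -/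
/-!
Write `g t j = lam t j / (1 + a * xhat t j)` for the fitnesses along the resident orbit. Then
`g 0 j * g 1 j = lam 0 j * lam 1 j / (lbar 0 * lbar 1)`, and since `xhat t` does not depend on
the patch, the total fitnesses satisfy `(∑ j, g 0 j) * (∑ j, g 1 j) = n ^ 2`. The sedentary
mutant `d̃ = 0` has the diagonal invasion matrix `diag (g 1 * g 0)`, whose entries are
eigenvalues, so the Nash condition gives `g 0 j * g 1 j ≤ 1` in every patch. Equality in every
patch would mean `g 1 = (g 0)⁻¹`, and then `(∑ j, (g 0 j)⁻¹) * (∑ j, g 0 j) = n ^ 2` forces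
`g 0`, hence also `g 1`, to be constant (equality case of Cauchy–Schwarz), contradicting spatial
heterogeneity.
-/

open Matrix

lemma norm_le_specRad {n : ℕ} {M : Matrix (Fin n) (Fin n) ℝ} {μ : ℂ}
    (h : μ ∈ spectrum ℂ (M.map (fun x => (x : ℂ)))) : ‖μ‖ ≤ specRad M :=
  le_csSup ((Matrix.finite_spectrum _).image _).bddAbove ⟨μ, h, rfl⟩

lemma le_specRad_diagonal {n : ℕ} (d : Fin n → ℝ) (j : Fin n) :
    d j ≤ specRad (diagonal d) := by
  have hmem : (d j : ℂ) ∈ spectrum ℂ ((diagonal d).map (fun x => (x : ℂ))) := by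
    rw [diagonal_map Complex.ofReal_zero, spectrum_diagonal]
    exact ⟨j, rfl⟩
  exact (le_abs_self _).trans (by simpa using norm_le_specRad hmem)

section

variable {K : Type*} [Field K]

lemma one_add_mul_orbit {a m L : K} (ha : a ≠ 0) (hm : 1 + m ≠ 0) :
    1 + a * ((L - 1) / (a * (1 + m))) = (m + L) / (1 + m) := by
  field_simp
  ring

variable [LinearOrder K] [IsStrictOrderedRing K]

lemma two_le_div_add_div {x y : K} (hx : 0 < x) (hy : 0 < y) : 2 ≤ x / y + y / x := by
  rw [div_add_div _ _ hy.ne' hx.ne', le_div_iff₀ (by positivity)]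
  nlinarith [sq_nonneg (x - y)]

lemma two_lt_div_add_div {x y : K} (hx : 0 < x) (hy : 0 < y) (hxy : x ≠ y) :
    2 < x / y + y / x := by
  rw [div_add_div _ _ hy.ne' hx.ne', lt_div_iff₀ (by positivity)]
  nlinarith [sq_pos_of_ne_zero (sub_ne_zero.mpr hxy)]

lemma card_sq_lt_sum_inv_mul_sum {ι : Type*} [Fintype ι] {g : ι → K} (hg : ∀ i, 0 < g i)
    {i j : ι} (hij : g i ≠ g j) :
    (Fintype.card ι : K) ^ 2 < (∑ i, (g i)⁻¹) * ∑ i, g i := by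
  have hpairs : 2 * ((∑ i, (g i)⁻¹) * ∑ i, g i)
      = ∑ p : ι × ι, (g p.1 / g p.2 + g p.2 / g p.1) := by
    rw [Finset.sum_add_distrib, Fintype.sum_prod_type_right, Fintype.sum_prod_type,
      ← two_mul, Finset.sum_mul_sum]
    simp_rw [div_eq_inv_mul]
  have hcard : 2 * (Fintype.card ι : K) ^ 2 = ∑ _p : ι × ι, (2 : K) := by
    rw [Finset.sum_const, Finset.card_univ, Fintype.card_prod, nsmul_eq_mul]
    push_cast
    ring
  suffices 2 * (Fintype.card ι : K) ^ 2 < 2 * ((∑ i, (g i)⁻¹) * ∑ i, g i) by linarith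
  rw [hpairs, hcard]
  exact Finset.sum_lt_sum (fun p _ => two_le_div_add_div (hg p.1) (hg p.2))
    ⟨(i, j), Finset.mem_univ _, two_lt_div_add_div (hg i) (hg j) hij⟩

lemma exists_mul_lt_one_of_sum_mul_sum_eq_card_sq {ι : Type*} [Fintype ι] {g₀ g₁ : ι → K}
    (hg₀ : ∀ i, 0 < g₀ i) (hsum : (∑ i, g₀ i) * ∑ i, g₁ i = (Fintype.card ι : K) ^ 2)
    (hle : ∀ i, g₀ i * g₁ i ≤ 1) {j k : ι} (hjk : g₀ j ≠ g₀ k ∨ g₁ j ≠ g₁ k) :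
    ∃ i, g₀ i * g₁ i < 1 := by
  by_contra! hge
  have hinv : g₁ = g₀⁻¹ :=
    funext fun i => eq_inv_of_mul_eq_one_right ((hle i).antisymm (hge i))
  have hne : g₀ j ≠ g₀ k := hjk.elim id fun h h' => h (by simp [hinv, h'])
  have hCS := card_sq_lt_sum_inv_mul_sum hg₀ hne
  rw [mul_comm, ← hsum, hinv] at hCS
  exact hCS.false

lemma one_add_mul_orbit_pos {a m L : K} (ha : a ≠ 0) (hm : 0 ≤ m) (hL : 0 < L) :
    0 < 1 + a * ((L - 1) / (a * (1 + m))) := by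
  rw [one_add_mul_orbit ha (by positivity)]
  positivity

lemma one_add_mul_orbit_mul {a m₀ m₁ : K} (ha : a ≠ 0) (h₀ : 0 < m₀) (h₁ : 0 < m₁) :
    (1 + a * ((m₀ * m₁ - 1) / (a * (1 + m₀)))) * (1 + a * ((m₀ * m₁ - 1) / (a * (1 + m₁))))
      = m₀ * m₁ := by
  rw [one_add_mul_orbit ha (by positivity), one_add_mul_orbit ha (by positivity)]
  field_simp

end

theorem full_dispersal_nash_necessary_general {n : ℕ}
    (a : ℝ) (ha : 0 < a)
    (lam : Fin 2 → Fin n → ℝ) (hlam : ∀ t j, 0 < lam t j)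
    (lbar : Fin 2 → ℝ) (hlbar : ∀ t, lbar t = (∑ j, lam t j) / n)
    (xhat : Fin 2 → Fin n → ℝ)
    (hxhat : ∀ t j, xhat t j = (lbar 0 * lbar 1 - 1) / (a * (1 + lbar t)))
    (S : Matrix (Fin n) (Fin n) ℝ)
    (F : Fin 2 → Matrix (Fin n) (Fin n) ℝ)
    (hF : ∀ t, F t = Matrix.diagonal fun j => lam t j / (1 + a * xhat t j))
    (hspat : ∃ t, ∃ j k, (F t).diag j ≠ (F t).diag k)
    (hnash : ∀ dt : ℝ, 0 ≤ dt → dt ≤ 1 →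
      specRad (((1 - dt) • 1 + dt • S) * F 1 * (((1 - dt) • 1 + dt • S) * F 0)) ≤ 1) :
    (∀ j, lam 0 j * lam 1 j ≤ lbar 0 * lbar 1) ∧
    (∃ j, lam 0 j * lam 1 j < lbar 0 * lbar 1) := by
  obtain ⟨t₀, j₀, k₀, hspat⟩ := hspat
  have hn : (0 : ℝ) < n := Nat.cast_pos.mpr (Fin.pos j₀)
  have hsum (t : Fin 2) : ∑ j, lam t j = n * lbar t := by rw [hlbar, mul_div_cancel₀ _ hn.ne']
  have hlbar_pos (t : Fin 2) : 0 < lbar t := by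
    rw [hlbar]
    exact div_pos (Finset.sum_pos (fun j _ => hlam t j) ⟨j₀, Finset.mem_univ _⟩) hn
  have hL : 0 < lbar 0 * lbar 1 := mul_pos (hlbar_pos 0) (hlbar_pos 1)
  set D : Fin 2 → ℝ := fun t => 1 + a * ((lbar 0 * lbar 1 - 1) / (a * (1 + lbar t)))
  have hD_mul : D 0 * D 1 = lbar 0 * lbar 1 :=
    one_add_mul_orbit_mul ha.ne' (hlbar_pos 0) (hlbar_pos 1)
  set g : Fin 2 → Fin n → ℝ := fun t j => lam t j / D t
  have hFg (t : Fin 2) : F t = diagonal (g t) := by simp only [hF, hxhat, g, D]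
  have hg_pos (j : Fin n) : 0 < g 0 j :=
    div_pos (hlam 0 j) (one_add_mul_orbit_pos ha.ne' (hlbar_pos 0).le hL)
  have hg_mul (j : Fin n) : g 0 j * g 1 j = lam 0 j * lam 1 j / (lbar 0 * lbar 1) := by
    rw [div_mul_div_comm, hD_mul]
  have hmean : (∑ j, g 0 j) * ∑ j, g 1 j = (Fintype.card (Fin n) : ℝ) ^ 2 := by
    rw [← Finset.sum_div, ← Finset.sum_div, hsum, hsum, div_mul_div_comm, hD_mul,
      mul_mul_mul_comm, mul_div_assoc, div_self hL.ne', mul_one, Fintype.card_fin, sq]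
  have hle (j : Fin n) : g 0 j * g 1 j ≤ 1 := by
    have hrad : specRad (diagonal fun j => g 1 j * g 0 j) ≤ 1 := by
      simpa [hFg] using hnash 0 le_rfl zero_le_one
    exact mul_comm (g 0 j) _ ▸ (le_specRad_diagonal _ j).trans hrad
  have hhet : g 0 j₀ ≠ g 0 k₀ ∨ g 1 j₀ ≠ g 1 k₀ := by
    rw [hFg, diag_diagonal] at hspat
    fin_cases t₀
    exacts [.inl hspat, .inr hspat]
  obtain ⟨j, hj⟩ := exists_mul_lt_one_of_sum_mul_sum_eq_card_sq hg_pos hmean hle hhet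
  exact ⟨fun j => (div_le_one hL).mp (hg_mul j ▸ hle j), j, (div_lt_one hL).mp (hg_mul j ▸ hj)⟩

/-- In the periodically forced Beverton–Holt model with uniform dispersal: if full
dispersal `d = 1` is a Nash equilibrium (every mutant dispersal rate `d̃ ∈ [0,1]` has
invasion rate at most one along the period-2 orbit of the fully dispersive resident),
then `λ₁ʲλ₂ʲ ≤ λ̄₁λ̄₂` for every patch `j`, with a strict inequality for some `j`. -/
theorem full_dispersal_nash_necessary {n : ℕ} (hn : 2 ≤ n)
    (a : ℝ) (ha : 0 < a)
    (lam : Fin 2 → Fin n → ℝ) (hlam : ∀ t j, 0 < lam t j)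
    (lbar : Fin 2 → ℝ) (hlbar : ∀ t, lbar t = (∑ j, lam t j) / n)
    (hpersist : 1 < lbar 0 * lbar 1)
    (xhat : Fin 2 → Fin n → ℝ)
    (hxhat : ∀ t j, xhat t j = (lbar 0 * lbar 1 - 1) / (a * (1 + lbar t)))
    (S : Matrix (Fin n) (Fin n) ℝ) (hS : ∀ k j, S k j = 1 / n)
    (F : Fin 2 → Matrix (Fin n) (Fin n) ℝ)
    (hF : ∀ t, F t = Matrix.diagonal fun j => lam t j / (1 + a * xhat t j))
    (htemp : F 0 ≠ F 1)
    (hspat : ∃ t, ∃ j k, (F t).diag j ≠ (F t).diag k)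
    (hnash : ∀ dt : ℝ, 0 ≤ dt → dt ≤ 1 →
      specRad (((1 - dt) • 1 + dt • S) * F 1 * (((1 - dt) • 1 + dt • S) * F 0)) ≤ 1) :
    (∀ j, lam 0 j * lam 1 j ≤ lbar 0 * lbar 1) ∧
    (∃ j, lam 0 j * lam 1 j < lbar 0 * lbar 1) :=
  full_dispersal_nash_necessary_general a ha lam hlam lbar hlbar xhat hxhat S F hF hspat hnash
end
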